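/- arXiv:1501.04939 — 6 statements merged into one kernel-verified Lean document; each statement's English description precedes it below -/
import Mathlib

section
/- Let B : ℝ → ℝ be measurable with 0 < B₋ ≤ B(t) ≤ B₊ for almost every t ∈ ℝ and B(t) = B₊ for almost every t > 0. Let b(x) := ∫₀ˣ B(t) dt, fix x̃ < 0, and define the step function W(x) := b(x̃)² − (B₊·x̃)² for x < x̃ and W(x) := 0 for x ≥ x̃. Then for every k ≥ 0 and every x ∈ ℝ one has (b(x) − k)² ≤ (B₊·x − k)² + W(x). -/
open MeasureTheory

/-- If `B` is measurable with `0 < B₋ ≤ B(t) ≤ B₊` a.e. and `B(t) = B₊`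
for a.e. `t > 0`, `b(x) = ∫₀ˣ B(t) dt`, `x̃ < 0`, and `W` is the step function with
`W(x) = b(x̃)² − (B₊x̃)²` for `x < x̃` and `W(x) = 0` for `x ≥ x̃`, then for every `k ≥ 0` and
every `x` one has `(b(x) − k)² ≤ (B₊x − k)² + W(x)`. -/
theorem stmt_10 (B : ℝ → ℝ) (hB : Measurable B) (Bm Bp : ℝ)
    (hBm : 0 < Bm) (hBmp : Bm ≤ Bp)
    (hbound : ∀ᵐ t : ℝ ∂volume, Bm ≤ B t ∧ B t ≤ Bp)
    (hBconst : ∀ᵐ t : ℝ ∂volume, 0 < t → B t = Bp)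
    (b : ℝ → ℝ) (hb : ∀ x, b x = ∫ t in (0:ℝ)..x, B t)
    (xt : ℝ) (hxt : xt < 0) (W : ℝ → ℝ)
    (hW : ∀ x, W x = if x < xt then (b xt) ^ 2 - (Bp * xt) ^ 2 else 0) :
    ∀ k : ℝ, 0 ≤ k → ∀ x : ℝ, (b x - k) ^ 2 ≤ (Bp * x - k) ^ 2 + W x := by
  -- integrability of B on any interval
  have hint : ∀ x y : ℝ, IntervalIntegrable B volume x y := by
    intro x y
    rw [intervalIntegrable_iff]
    have hc : IntegrableOn (fun _ => Bp) (Set.uIoc x y) volume :=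
      integrableOn_const measure_Ioc_lt_top.ne
    refine Integrable.mono' hc hB.aestronglyMeasurable ?_
    · filter_upwards [ae_restrict_of_ae hbound] with t ht
      rw [Real.norm_eq_abs, abs_le]
      constructor <;> nlinarith [ht.1, ht.2]
  -- bounds on interval integrals
  have hIub : ∀ x y : ℝ, x ≤ y → (∫ t in x..y, B t) ≤ Bp * (y - x) := by
    intro x y hxy
    have := intervalIntegral.integral_mono_ae hxy (hint x y)
      (intervalIntegrable_const (c := Bp))
      (by filter_upwards [hbound] with t ht; exact ht.2)
    simpa [mul_comm] using this
  have hIlb : ∀ x y : ℝ, x ≤ y → Bm * (y - x) ≤ ∫ t in x..y, B t := by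
    intro x y hxy
    have := intervalIntegral.integral_mono_ae hxy
      (intervalIntegrable_const (c := Bm)) (hint x y)
      (by filter_upwards [hbound] with t ht; exact ht.1)
    simpa [mul_comm] using this
  -- for x < 0 : Bp * x ≤ b x ≤ Bm * x
  have hneg : ∀ x : ℝ, x ≤ 0 → Bp * x ≤ b x ∧ b x ≤ Bm * x := by
    intro x hx
    have hsym : b x = -(∫ t in x..(0:ℝ), B t) := by
      rw [hb x, intervalIntegral.integral_symm]
    constructor
    · rw [hsym]
      have := hIub x 0 hx
      linarith
    · rw [hsym]
      have := hIlb x 0 hx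
      linarith
  -- for 0 ≤ x : b x = Bp * x
  have hpos : ∀ x : ℝ, 0 ≤ x → b x = Bp * x := by
    intro x hx
    rw [hb x]
    have : (∫ t in (0:ℝ)..x, B t) = ∫ t in (0:ℝ)..x, Bp := by
      apply intervalIntegral.integral_congr_ae
      filter_upwards [hBconst] with t ht htm
      rw [Set.uIoc_of_le hx] at htm
      exact ht htm.1
    rw [this]
    simp [mul_comm]
  -- relation between b x and b xt for x ≤ xt
  have hrel : ∀ x : ℝ, x ≤ xt → b xt - b x = ∫ t in x..xt, B t := by
    intro x hx
    rw [hb, hb, ← intervalIntegral.integral_add_adjacent_intervals (hint 0 x) (hint x xt)]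
    ring
  intro k hk x
  rcases lt_or_ge x xt with hx | hx
  · -- x < xt < 0
    rw [hW x, if_pos hx]
    obtain ⟨h1, h2⟩ := hneg x (by linarith)
    obtain ⟨h3, h4⟩ := hneg xt (by linarith)
    have h5 : b xt - b x ≤ Bp * (xt - x) := by rw [hrel x hx.le]; exact hIub x xt hx.le
    have h6 : Bm * (xt - x) ≤ b xt - b x := by rw [hrel x hx.le]; exact hIlb x xt hx.le
    have hbx0 : b x ≤ 0 := by nlinarith
    have hbxt0 : b xt ≤ 0 := by nlinarith
    nlinarith [mul_nonneg hk (sub_nonneg.2 h1),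
      mul_nonneg (sub_nonneg.2 h5) (by nlinarith : (0:ℝ) ≤ -(Bp * x + Bp * xt)),
      mul_nonneg (by nlinarith : (0:ℝ) ≤ b xt - b x)
        (by nlinarith : (0:ℝ) ≤ (b x + b xt) - (Bp * x + Bp * xt))]
  · rw [hW x, if_neg (not_lt.2 hx)]
    rcases le_or_gt 0 x with hx0 | hx0
    · rw [hpos x hx0]; nlinarith
    · obtain ⟨h1, h2⟩ := hneg x hx0.le
      have hbx0 : b x ≤ 0 := by nlinarith
      nlinarith [mul_nonneg hk (sub_nonneg.2 h1)]
end

section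
/- Let m > 0 and C₀ > 0, let V : ℝ² → [0,∞) be measurable with V(x,ξ) ≤ C₀(1+x²+ξ²)^{−m/2} for all (x,ξ). Let B : ℝ → ℝ be measurable with 0 < B₋ ≤ B(t) ≤ B₊ a.e., b(x) := ∫₀ˣ B(t) dt with inverse b⁻¹. Fix ε > 0 and a continuous χ_ε : ℝ → [0,1] with χ_ε = 0 on (−∞,−2ε] and χ_ε = 1 on [−ε,∞); set V_ε(x,ξ) := χ_ε(x)V(x,ξ) and Ṽ_ε(x,ξ) := V_ε(b⁻¹(x),−ξ). If the function λ ↦ N(λ,V,−ε) satisfies the homogeneity condition lim_{ϵ↓0} limsup_{λ↓0} λ^{2/m}·(N(λ(1−ϵ),V,−ε) − N(λ(1+ϵ),V,−ε)) = 0, then the function λ ↦ N(λ,Ṽ_ε) := (2π)^{−1}·vol{(x,ξ) ∈ ℝ² : Ṽ_ε(x,ξ) > λ} also satisfies lim_{ϵ↓0} limsup_{λ↓0} λ^{2/m}·(N(λ(1−ϵ),Ṽ_ε) − N(λ(1+ϵ),Ṽ_ε)) = 0. -/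
open MeasureTheory Filter Topology

/-- The volume function `N(λ, V, s) = (2π)⁻¹ vol{(x,ξ) : V(x,ξ) > λ, x > s}`. -/
noncomputable def volN (V : ℝ → ℝ → ℝ) (s lam : ℝ) : ℝ :=
  (2 * Real.pi)⁻¹ * (volume {p : ℝ × ℝ | V p.1 p.2 > lam ∧ p.1 > s}).toReal

/-- The volume function `N(λ, a) = (2π)⁻¹ vol{(x,ξ) : a(x,ξ) > λ}`. -/
noncomputable def volNa (a : ℝ → ℝ → ℝ) (lam : ℝ) : ℝ :=
  (2 * Real.pi)⁻¹ * (volume {p : ℝ × ℝ | a p.1 p.2 > lam}).toReal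

/-- The homogeneity condition
`lim_{ϵ↓0} limsup_{λ↓0} λ^{2/m}(f(λ(1−ϵ)) − f(λ(1+ϵ))) = 0`. -/
def HomCond (m : ℝ) (f : ℝ → ℝ) : Prop :=
  Tendsto (fun ε : ℝ => limsup (fun lam : ℝ =>
      lam ^ (2 / m) * (f (lam * (1 - ε)) - f (lam * (1 + ε)))) (𝓝[>] (0:ℝ)))
    (𝓝[>] (0:ℝ)) (𝓝 0)

section Aux

/-- Interval integrability of an a.e.-bounded measurable function. -/
lemma aux_intInt {B : ℝ → ℝ} (hB : Measurable B) {Bm Bp : ℝ} (hBm : 0 < Bm)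
    (hbound : ∀ᵐ t : ℝ ∂volume, Bm ≤ B t ∧ B t ≤ Bp) (u v : ℝ) :
    IntervalIntegrable B volume u v := by
  rw [intervalIntegrable_iff]
  have hfin : volume (Set.uIoc u v) < ⊤ := by
    rw [Set.uIoc]; exact measure_Ioc_lt_top
  have hg : IntegrableOn (fun _ : ℝ => Bp) (Set.uIoc u v) volume :=
    integrableOn_const hfin.ne
  refine hg.mono' hB.aestronglyMeasurable.restrict ?_
  filter_upwards [ae_restrict_of_ae hbound] with t ht
  rw [Real.norm_eq_abs, abs_of_nonneg (hBm.le.trans ht.1)]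
  exact ht.2

/-- Growth bounds for the primitive `b`. -/
lemma aux_bgrow {B : ℝ → ℝ} (hB : Measurable B) {Bm Bp : ℝ} (hBm : 0 < Bm)
    (hbound : ∀ᵐ t : ℝ ∂volume, Bm ≤ B t ∧ B t ≤ Bp)
    {b : ℝ → ℝ} (hb : ∀ x, b x = ∫ t in (0:ℝ)..x, B t)
    {x y : ℝ} (hxy : x ≤ y) :
    Bm * (y - x) ≤ b y - b x ∧ b y - b x ≤ Bp * (y - x) := by
  have hint := aux_intInt hB hBm hbound
  have hdiff : b y - b x = ∫ t in x..y, B t := by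
    rw [hb, hb, intervalIntegral.integral_interval_sub_left (hint 0 y) (hint 0 x)]
  have h1 : (∫ _ in x..y, (Bm : ℝ)) ≤ ∫ t in x..y, B t :=
    intervalIntegral.integral_mono_ae hxy intervalIntegrable_const (hint x y)
      (hbound.mono fun t ht => ht.1)
  have h2 : (∫ t in x..y, B t) ≤ ∫ _ in x..y, (Bp : ℝ) :=
    intervalIntegral.integral_mono_ae hxy (hint x y) intervalIntegrable_const
      (hbound.mono fun t ht => ht.2)
  rw [intervalIntegral.integral_const, smul_eq_mul] at h1 h2
  constructor
  · rw [hdiff]; nlinarith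
  · rw [hdiff]; nlinarith

/-- The measure of `β ⁻¹' A` is at most `Bp` times the measure of `A`. -/
lemma aux_map_le {B : ℝ → ℝ} (hB : Measurable B) {Bm Bp : ℝ} (hBm : 0 < Bm)
    (hbound : ∀ᵐ t : ℝ ∂volume, Bm ≤ B t ∧ B t ≤ Bp)
    {b β : ℝ → ℝ} (hb : ∀ x, b x = ∫ t in (0:ℝ)..x, B t)
    (hβ₁ : ∀ k, b (β k) = k)
    (hbs : StrictMono b) (hβm : Measurable β)
    {A : Set ℝ} (hA : MeasurableSet A) :
    volume (β ⁻¹' A) ≤ ENNReal.ofReal Bp * volume A := by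
  have hint := aux_intInt hB hBm hbound
  have key : ∀ c d : ℝ, c < d →
      Measure.map β volume (Set.Ioc c d) = ENNReal.ofReal (b d - b c) := by
    intro c d hcd
    rw [Measure.map_apply hβm measurableSet_Ioc]
    have himg : β ⁻¹' Set.Ioc c d = Set.Ioc (b c) (b d) := by
      ext x
      simp only [Set.mem_preimage, Set.mem_Ioc]
      constructor
      · rintro ⟨h1, h2⟩
        refine ⟨?_, ?_⟩
        · have := hbs h1; rwa [hβ₁] at this
        · have := hbs.monotone h2; rwa [hβ₁] at this
      · rintro ⟨h1, h2⟩
        refine ⟨?_, ?_⟩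
        · have h1' : b c < b (β x) := by rwa [hβ₁]
          exact hbs.lt_iff_lt.mp h1'
        · have h2' : b (β x) ≤ b d := by rwa [hβ₁]
          exact hbs.le_iff_le.mp h2'
    rw [himg, Real.volume_Ioc]
  have hmap : Measure.map β volume
      = volume.withDensity (fun t => ENNReal.ofReal (B t)) := by
    refine Measure.ext_of_Ioc' _ _ (fun c d hcd => ?_) (fun c d hcd => ?_)
    · rw [key c d hcd]; exact ENNReal.ofReal_ne_top
    · rw [key c d hcd, withDensity_apply _ measurableSet_Ioc]
      have hBnn : 0 ≤ᵐ[volume.restrict (Set.Ioc c d)] B :=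
        ae_restrict_of_ae (hbound.mono fun t ht => hBm.le.trans ht.1)
      have hBint : IntegrableOn B (Set.Ioc c d) := by
        have h := hint c d
        rw [intervalIntegrable_iff, Set.uIoc_of_le hcd.le] at h
        exact h
      rw [← ofReal_integral_eq_lintegral_ofReal hBint hBnn]
      congr 1
      rw [← intervalIntegral.integral_of_le hcd.le,
        ← intervalIntegral.integral_interval_sub_left (hint 0 d) (hint 0 c), ← hb, ← hb]
  calc volume (β ⁻¹' A) = Measure.map β volume A := (Measure.map_apply hβm hA).symm
    _ = ∫⁻ t in A, ENNReal.ofReal (B t) := by rw [hmap, withDensity_apply _ hA]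
    _ ≤ ∫⁻ _ in A, ENNReal.ofReal Bp := by
        refine lintegral_mono_ae ?_
        filter_upwards [ae_restrict_of_ae hbound] with t ht
        exact ENNReal.ofReal_le_ofReal ht.2
    _ = ENNReal.ofReal Bp * volume A := by rw [setLIntegral_const]

/-- Two-dimensional version: the transformation `(x,ξ) ↦ (β x, -ξ)` expands measure
by at most `Bp`. -/
lemma aux_2d {β : ℝ → ℝ} (hβm : Measurable β) {Bp : ℝ}
    (hβvol : ∀ A : Set ℝ, MeasurableSet A → volume (β ⁻¹' A) ≤ ENNReal.ofReal Bp * volume A)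
    {E : Set (ℝ × ℝ)} (hE : MeasurableSet E) :
    volume {p : ℝ × ℝ | (β p.1, -p.2) ∈ E} ≤ ENNReal.ofReal Bp * volume E := by
  have hT : Measurable (fun p : ℝ × ℝ => ((β p.1, -p.2) : ℝ × ℝ)) :=
    (hβm.comp measurable_fst).prodMk measurable_snd.neg
  have hS : MeasurableSet {p : ℝ × ℝ | (β p.1, -p.2) ∈ E} := hT hE
  have hmeas_sec : Measurable (fun η : ℝ => volume ((fun y => (y, η)) ⁻¹' E)) :=
    measurable_measure_prodMk_right hE
  rw [show (volume : Measure (ℝ × ℝ)) = (volume : Measure ℝ).prod volume from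
    Measure.volume_eq_prod ℝ ℝ]
  rw [Measure.prod_apply_symm hS]
  have hseteq : ∀ ξ : ℝ, (fun x => (x, ξ)) ⁻¹' {p : ℝ × ℝ | (β p.1, -p.2) ∈ E}
      = β ⁻¹' ((fun y => (y, -ξ)) ⁻¹' E) := fun ξ => rfl
  calc (∫⁻ ξ, volume ((fun x => (x, ξ)) ⁻¹' {p : ℝ × ℝ | (β p.1, -p.2) ∈ E}))
      ≤ ∫⁻ ξ, ENNReal.ofReal Bp * volume ((fun y => (y, -ξ)) ⁻¹' E) := by
        refine lintegral_mono fun ξ => ?_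
        rw [hseteq ξ]
        exact hβvol _ (measurable_prodMk_right hE)
    _ = ENNReal.ofReal Bp * ∫⁻ ξ, volume ((fun y => (y, -ξ)) ⁻¹' E) :=
        lintegral_const_mul' _ _ ENNReal.ofReal_ne_top
    _ = ENNReal.ofReal Bp * ∫⁻ η, volume ((fun y => (y, η)) ⁻¹' E) := by
        congr 1
        exact (Measure.measurePreserving_neg (volume : Measure ℝ)).lintegral_comp hmeas_sec
    _ = ENNReal.ofReal Bp * (volume : Measure ℝ).prod volume E := by
        rw [Measure.prod_apply_symm hE]

end Aux

set_option maxHeartbeats 1600000 in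
/-- Transfer of the homogeneity condition from `λ ↦ N(λ,V,−ε)` to
`λ ↦ N(λ,Ṽ_ε)`, where `Ṽ_ε(x,ξ) = χ_ε(b⁻¹(x))·V(b⁻¹(x),−ξ)`. -/
theorem stmt_11 (m C₀ : ℝ) (hm : 0 < m) (hC₀ : 0 < C₀)
    (V : ℝ → ℝ → ℝ) (hVmeas : Measurable (fun p : ℝ × ℝ => V p.1 p.2))
    (hVnn : ∀ x ξ : ℝ, 0 ≤ V x ξ)
    (hVbd : ∀ x ξ : ℝ, V x ξ ≤ C₀ * (1 + x ^ 2 + ξ ^ 2) ^ (-(m / 2)))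
    (B : ℝ → ℝ) (hB : Measurable B) (Bm Bp : ℝ)
    (hBm : 0 < Bm) (hBmp : Bm ≤ Bp)
    (hbound : ∀ᵐ t : ℝ ∂volume, Bm ≤ B t ∧ B t ≤ Bp)
    (b β : ℝ → ℝ) (hb : ∀ x, b x = ∫ t in (0:ℝ)..x, B t)
    (hβ₁ : ∀ k, b (β k) = k) (hβ₂ : ∀ x, β (b x) = x)
    (ε : ℝ) (hε : 0 < ε) (χ : ℝ → ℝ) (hχc : Continuous χ)
    (hχ01 : ∀ x, 0 ≤ χ x ∧ χ x ≤ 1)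
    (hχ0 : ∀ x, x ≤ -2 * ε → χ x = 0) (hχ1 : ∀ x, -ε ≤ x → χ x = 1)
    (hhom : HomCond m (fun lam => volN V (-ε) lam)) :
    HomCond m (fun lam => volNa (fun x ξ => χ (β x) * V (β x) (-ξ)) lam) := by
  have hπ : (0:ℝ) < 2 * Real.pi := by positivity
  have hBp : (0:ℝ) < Bp := lt_of_lt_of_le hBm hBmp
  have hbs : StrictMono b := fun u v huv => by
    have := (aux_bgrow hB hBm hbound hb huv.le).1; nlinarith
  have hβs : StrictMono β := fun u v huv => by
    by_contra h
    push_neg at h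
    have h2 := hbs.monotone h
    rw [hβ₁, hβ₁] at h2
    exact absurd h2 (not_le.mpr huv)
  have hβm : Measurable β := hβs.monotone.measurable
  have hβvol : ∀ A : Set ℝ, MeasurableSet A →
      volume (β ⁻¹' A) ≤ ENNReal.ofReal Bp * volume A :=
    fun A hA => aux_map_le hB hBm hbound hb hβ₁ hbs hβm hA
  -- radius bound
  set R : ℝ → ℝ := fun t => Real.sqrt ((C₀ / t) ^ (2 / m)) with hR
  have hRnn : ∀ t, 0 ≤ R t := fun t => Real.sqrt_nonneg _
  have hsize : ∀ t : ℝ, 0 < t → ∀ y ξ : ℝ, t < V y ξ →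
      y ^ 2 < (C₀ / t) ^ (2 / m) ∧ ξ ^ 2 < (C₀ / t) ^ (2 / m) := by
    intro t ht y ξ hV
    have hu1 : (1:ℝ) ≤ 1 + y ^ 2 + ξ ^ 2 := by nlinarith [sq_nonneg y, sq_nonneg ξ]
    have hu0 : (0:ℝ) < 1 + y ^ 2 + ξ ^ 2 := lt_of_lt_of_le one_pos hu1
    have hup : (0:ℝ) < (1 + y ^ 2 + ξ ^ 2) ^ (m / 2) := Real.rpow_pos_of_pos hu0 _
    have h1 : t < C₀ / (1 + y ^ 2 + ξ ^ 2) ^ (m / 2) := by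
      have h := hVbd y ξ
      rw [Real.rpow_neg hu0.le, ← div_eq_mul_inv] at h
      exact lt_of_lt_of_le hV h
    have h2 : (1 + y ^ 2 + ξ ^ 2) ^ (m / 2) < C₀ / t := by
      rw [lt_div_iff₀ ht]
      have := (lt_div_iff₀ hup).mp h1
      nlinarith
    have h3 : 1 + y ^ 2 + ξ ^ 2 < (C₀ / t) ^ (2 / m) := by
      have h4 := Real.rpow_lt_rpow (Real.rpow_nonneg hu0.le _) h2
        (by positivity : (0:ℝ) < 2 / m)
      rwa [← Real.rpow_mul hu0.le, show m / 2 * (2 / m) = 1 by field_simp,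
        Real.rpow_one] at h4
    constructor <;> nlinarith [sq_nonneg y, sq_nonneg ξ]
  have habs : ∀ t : ℝ, 0 < t → ∀ y ξ : ℝ, t < V y ξ → |y| < R t ∧ |ξ| < R t := by
    intro t ht y ξ hV
    obtain ⟨h1, h2⟩ := hsize t ht y ξ hV
    constructor
    · rw [← Real.sqrt_sq_eq_abs, hR]
      exact Real.sqrt_lt_sqrt (sq_nonneg y) h1
    · rw [← Real.sqrt_sq_eq_abs, hR]
      exact Real.sqrt_lt_sqrt (sq_nonneg ξ) h2
  -- measurability and finiteness of the "plain" sets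
  have hXmeas : ∀ t : ℝ, MeasurableSet {p : ℝ × ℝ | V p.1 p.2 > t ∧ p.1 > -ε} := by
    intro t
    exact (measurableSet_lt measurable_const hVmeas).inter
      (measurableSet_lt measurable_const measurable_fst)
  have hXfin : ∀ t : ℝ, 0 < t → volume {p : ℝ × ℝ | V p.1 p.2 > t ∧ p.1 > -ε} ≠ ⊤ := by
    intro t ht
    have hsub : {p : ℝ × ℝ | V p.1 p.2 > t ∧ p.1 > -ε}
        ⊆ Set.Ioo (-(R t)) (R t) ×ˢ Set.Ioo (-(R t)) (R t) := by
      rintro ⟨y, ξ⟩ ⟨h1, _⟩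
      obtain ⟨hy, hξ⟩ := habs t ht y ξ h1
      exact ⟨abs_lt.mp hy |>.imp id id, abs_lt.mp hξ |>.imp id id⟩
    refine ne_top_of_le_ne_top ?_ (measure_mono hsub)
    rw [Measure.volume_eq_prod ℝ ℝ, Measure.prod_prod]
    exact ENNReal.mul_ne_top measure_Ioo_lt_top.ne measure_Ioo_lt_top.ne
  -- measurability and finiteness of the "tilde" sets
  have hWmeas2 : Measurable (fun p : ℝ × ℝ => χ (β p.1) * V (β p.1) (-p.2)) :=
    (hχc.measurable.comp (hβm.comp measurable_fst)).mul
      (hVmeas.comp ((hβm.comp measurable_fst).prodMk measurable_snd.neg))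
  have hSmeas : ∀ t : ℝ, MeasurableSet {p : ℝ × ℝ | χ (β p.1) * V (β p.1) (-p.2) > t} :=
    fun t => measurableSet_lt measurable_const hWmeas2
  have hSfin : ∀ t : ℝ, 0 < t →
      volume {p : ℝ × ℝ | χ (β p.1) * V (β p.1) (-p.2) > t} ≠ ⊤ := by
    intro t ht
    have hsub : {p : ℝ × ℝ | χ (β p.1) * V (β p.1) (-p.2) > t}
        ⊆ Set.Ioo (b (-(R t))) (b (R t)) ×ˢ Set.Ioo (-(R t)) (R t) := by
      rintro ⟨x, ξ⟩ hmem
      have hV' : t < V (β x) (-ξ) :=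
        lt_of_lt_of_le hmem (mul_le_of_le_one_left (hVnn _ _) (hχ01 _).2)
      obtain ⟨hy, hξ⟩ := habs t ht (β x) (-ξ) hV'
      obtain ⟨hy1, hy2⟩ := abs_lt.mp hy
      constructor
      · constructor
        · have := hbs hy1; rwa [hβ₁] at this
        · have := hbs hy2; rwa [hβ₁] at this
      · rw [abs_neg] at hξ
        exact abs_lt.mp hξ |>.imp id id
    refine ne_top_of_le_ne_top ?_ (measure_mono hsub)
    rw [Measure.volume_eq_prod ℝ ℝ, Measure.prod_prod]
    exact ENNReal.mul_ne_top measure_Ioo_lt_top.ne measure_Ioo_lt_top.ne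
  -- difference formulas
  have hfdiff : ∀ t s : ℝ, 0 < t → t ≤ s →
      volN V (-ε) t - volN V (-ε) s = (2 * Real.pi)⁻¹ *
        (volume ({p : ℝ × ℝ | V p.1 p.2 > t ∧ p.1 > -ε}
          \ {p : ℝ × ℝ | V p.1 p.2 > s ∧ p.1 > -ε})).toReal := by
    intro t s ht hts
    have hsub : {p : ℝ × ℝ | V p.1 p.2 > s ∧ p.1 > -ε}
        ⊆ {p : ℝ × ℝ | V p.1 p.2 > t ∧ p.1 > -ε} :=
      fun p hp => ⟨lt_of_le_of_lt hts hp.1, hp.2⟩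
    rw [volN, volN, ← mul_sub]
    congr 1
    rw [measure_diff hsub (hXmeas s).nullMeasurableSet (hXfin s (lt_of_lt_of_le ht hts)),
      ENNReal.toReal_sub_of_le (measure_mono hsub) (hXfin t ht)]
  have hgdiff : ∀ t s : ℝ, 0 < t → t ≤ s →
      volNa (fun x ξ => χ (β x) * V (β x) (-ξ)) t
        - volNa (fun x ξ => χ (β x) * V (β x) (-ξ)) s = (2 * Real.pi)⁻¹ *
        (volume ({p : ℝ × ℝ | χ (β p.1) * V (β p.1) (-p.2) > t}
          \ {p : ℝ × ℝ | χ (β p.1) * V (β p.1) (-p.2) > s})).toReal := by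
    intro t s ht hts
    have hsub : {p : ℝ × ℝ | χ (β p.1) * V (β p.1) (-p.2) > s}
        ⊆ {p : ℝ × ℝ | χ (β p.1) * V (β p.1) (-p.2) > t} :=
      fun p hp => lt_of_le_of_lt hts hp
    rw [volNa, volNa, ← mul_sub]
    congr 1
    rw [measure_diff hsub (hSmeas s).nullMeasurableSet (hSfin s (lt_of_lt_of_le ht hts)),
      ENNReal.toReal_sub_of_le (measure_mono hsub) (hSfin t ht)]
  -- the core inequality
  have hcore : ∀ lam : ℝ, 0 < lam → ∀ ϵ : ℝ, 0 < ϵ → ϵ < 1 →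
      volNa (fun x ξ => χ (β x) * V (β x) (-ξ)) (lam * (1 - ϵ))
        - volNa (fun x ξ => χ (β x) * V (β x) (-ξ)) (lam * (1 + ϵ)) ≤
      Bp * (volN V (-ε) (lam * (1 - ϵ)) - volN V (-ε) (lam * (1 + ϵ)))
        + (2 * Real.pi)⁻¹ * (Bp * (ε * (2 * R (lam * (1 - ϵ))))) := by
    intro lam hlam ϵ hϵ0 hϵ1
    set a : ℝ := lam * (1 - ϵ) with ha_def
    set c : ℝ := lam * (1 + ϵ) with hc_def
    have ha : 0 < a := by rw [ha_def]; nlinarith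
    have hac : a ≤ c := by rw [ha_def, hc_def]; nlinarith
    have hc : 0 < c := lt_of_lt_of_le ha hac
    -- the sets
    set Ea : Set (ℝ × ℝ) := {p : ℝ × ℝ | χ p.1 * V p.1 p.2 > a} with hEa
    set Ec : Set (ℝ × ℝ) := {p : ℝ × ℝ | χ p.1 * V p.1 p.2 > c} with hEc
    have hWmeas : Measurable (fun p : ℝ × ℝ => χ p.1 * V p.1 p.2) :=
      (hχc.measurable.comp measurable_fst).mul hVmeas
    have hEameas : MeasurableSet Ea := measurableSet_lt measurable_const hWmeas
    have hEcmeas : MeasurableSet Ec := measurableSet_lt measurable_const hWmeas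
    have hseteq : {p : ℝ × ℝ | χ (β p.1) * V (β p.1) (-p.2) > a}
        \ {p : ℝ × ℝ | χ (β p.1) * V (β p.1) (-p.2) > c}
        = {p : ℝ × ℝ | (β p.1, -p.2) ∈ Ea \ Ec} := by
      ext p
      simp only [Set.mem_diff, Set.mem_setOf_eq, hEa, hEc]
    have hbd1 : volume ({p : ℝ × ℝ | χ (β p.1) * V (β p.1) (-p.2) > a}
        \ {p : ℝ × ℝ | χ (β p.1) * V (β p.1) (-p.2) > c})
        ≤ ENNReal.ofReal Bp * volume (Ea \ Ec) := by
      rw [hseteq]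
      exact aux_2d hβm hβvol (hEameas.diff hEcmeas)
    -- inclusion into the good set plus the strip
    have hincl : Ea \ Ec ⊆ ({p : ℝ × ℝ | V p.1 p.2 > a ∧ p.1 > -ε}
          \ {p : ℝ × ℝ | V p.1 p.2 > c ∧ p.1 > -ε})
        ∪ Set.Ioc (-(2 * ε)) (-ε) ×ˢ Set.Ioo (-(R a)) (R a) := by
      rintro ⟨y, ξ⟩ ⟨h1, h2⟩
      simp only [hEa, Set.mem_setOf_eq] at h1
      simp only [hEc, Set.mem_setOf_eq] at h2
      have hχpos : 0 < χ y := by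
        by_contra h
        push_neg at h
        have h0 : χ y = 0 := le_antisymm h (hχ01 y).1
        rw [h0, zero_mul] at h1
        linarith
      have hy2 : -(2 * ε) < y := by
        by_contra h
        push_neg at h
        rw [hχ0 y (by linarith)] at hχpos
        linarith
      have hVy : a < V y ξ :=
        lt_of_lt_of_le h1 (mul_le_of_le_one_left (hVnn _ _) (hχ01 _).2)
      by_cases hy : -ε < y
      · left
        have hχ1y : χ y = 1 := hχ1 y hy.le
        rw [hχ1y, one_mul] at h1 h2
        refine ⟨⟨h1, hy⟩, fun hc' => h2 hc'.1⟩
      · right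
        push_neg at hy
        have hξ := (habs a ha y ξ hVy).2
        exact ⟨⟨hy2, hy⟩, abs_lt.mp hξ |>.imp id id⟩
    set M1 : ENNReal := volume {p : ℝ × ℝ | V p.1 p.2 > a ∧ p.1 > -ε} with hM1
    set M2 : ENNReal := volume {p : ℝ × ℝ | V p.1 p.2 > c ∧ p.1 > -ε} with hM2
    have hXsub : {p : ℝ × ℝ | V p.1 p.2 > c ∧ p.1 > -ε}
        ⊆ {p : ℝ × ℝ | V p.1 p.2 > a ∧ p.1 > -ε} :=
      fun p hp => ⟨lt_of_le_of_lt hac hp.1, hp.2⟩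
    have hvolD2 : volume (Set.Ioc (-(2 * ε)) (-ε) ×ˢ Set.Ioo (-(R a)) (R a))
        = ENNReal.ofReal ε * ENNReal.ofReal (2 * R a) := by
      rw [Measure.volume_eq_prod ℝ ℝ, Measure.prod_prod, Real.volume_Ioc, Real.volume_Ioo]
      congr 1
      · congr 1; ring
      · congr 1; ring
    have hvolD1 : volume ({p : ℝ × ℝ | V p.1 p.2 > a ∧ p.1 > -ε}
        \ {p : ℝ × ℝ | V p.1 p.2 > c ∧ p.1 > -ε}) = M1 - M2 :=
      measure_diff hXsub (hXmeas c).nullMeasurableSet (hXfin c hc)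
    have hchain : volume ({p : ℝ × ℝ | χ (β p.1) * V (β p.1) (-p.2) > a}
        \ {p : ℝ × ℝ | χ (β p.1) * V (β p.1) (-p.2) > c})
        ≤ ENNReal.ofReal Bp * ((M1 - M2) + ENNReal.ofReal ε * ENNReal.ofReal (2 * R a)) := by
      refine le_trans hbd1 ?_
      refine mul_le_mul_right ?_ _
      calc volume (Ea \ Ec) ≤ volume (({p : ℝ × ℝ | V p.1 p.2 > a ∧ p.1 > -ε}
              \ {p : ℝ × ℝ | V p.1 p.2 > c ∧ p.1 > -ε})
            ∪ Set.Ioc (-(2 * ε)) (-ε) ×ˢ Set.Ioo (-(R a)) (R a)) := measure_mono hincl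
        _ ≤ volume ({p : ℝ × ℝ | V p.1 p.2 > a ∧ p.1 > -ε}
              \ {p : ℝ × ℝ | V p.1 p.2 > c ∧ p.1 > -ε})
            + volume (Set.Ioc (-(2 * ε)) (-ε) ×ˢ Set.Ioo (-(R a)) (R a)) := measure_union_le _ _
        _ = (M1 - M2) + ENNReal.ofReal ε * ENNReal.ofReal (2 * R a) := by
            rw [hvolD1, hvolD2]
    -- pass to real numbers
    have hM1fin : M1 ≠ ⊤ := hXfin a ha
    have hM2fin : M2 ≠ ⊤ := hXfin c hc
    have hrhs_fin : ENNReal.ofReal Bp * ((M1 - M2) + ENNReal.ofReal ε * ENNReal.ofReal (2 * R a))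
        ≠ ⊤ := by
      refine ENNReal.mul_ne_top ENNReal.ofReal_ne_top (ENNReal.add_ne_top.mpr ⟨?_, ?_⟩)
      · exact ne_top_of_le_ne_top hM1fin tsub_le_self
      · exact ENNReal.mul_ne_top ENNReal.ofReal_ne_top ENNReal.ofReal_ne_top
    have htoReal : (volume ({p : ℝ × ℝ | χ (β p.1) * V (β p.1) (-p.2) > a}
        \ {p : ℝ × ℝ | χ (β p.1) * V (β p.1) (-p.2) > c})).toReal
        ≤ Bp * ((M1.toReal - M2.toReal) + ε * (2 * R a)) := by
      have h1 := ENNReal.toReal_mono hrhs_fin hchain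
      rw [ENNReal.toReal_mul, ENNReal.toReal_add (ne_top_of_le_ne_top hM1fin tsub_le_self)
          (ENNReal.mul_ne_top ENNReal.ofReal_ne_top ENNReal.ofReal_ne_top),
        ENNReal.toReal_sub_of_le (measure_mono hXsub) hM1fin,
        ENNReal.toReal_mul, ENNReal.toReal_ofReal hBp.le, ENNReal.toReal_ofReal hε.le,
        ENNReal.toReal_ofReal (by positivity : (0:ℝ) ≤ 2 * R a)] at h1
      exact h1
    have hfd : volN V (-ε) a - volN V (-ε) c
        = (2 * Real.pi)⁻¹ * (M1.toReal - M2.toReal) := by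
      rw [volN, volN, ← mul_sub, ← hM1, ← hM2]
    rw [hgdiff a c ha hac, hfd]
    calc (2 * Real.pi)⁻¹ * (volume ({p : ℝ × ℝ | χ (β p.1) * V (β p.1) (-p.2) > a}
          \ {p : ℝ × ℝ | χ (β p.1) * V (β p.1) (-p.2) > c})).toReal
        ≤ (2 * Real.pi)⁻¹ * (Bp * ((M1.toReal - M2.toReal) + ε * (2 * R a))) := by
          refine mul_le_mul_of_nonneg_left htoReal ?_
          positivity
      _ = Bp * ((2 * Real.pi)⁻¹ * (M1.toReal - M2.toReal))
          + (2 * Real.pi)⁻¹ * (Bp * (ε * (2 * R a))) := by ring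
  -- nonnegativity of the differences
  have hfnn : ∀ t s : ℝ, 0 < t → t ≤ s → 0 ≤ volN V (-ε) t - volN V (-ε) s := by
    intro t s ht hts
    rw [hfdiff t s ht hts]
    positivity
  have hgnn : ∀ t s : ℝ, 0 < t → t ≤ s →
      0 ≤ volNa (fun x ξ => χ (β x) * V (β x) (-ξ)) t
        - volNa (fun x ξ => χ (β x) * V (β x) (-ξ)) s := by
    intro t s ht hts
    rw [hgdiff t s ht hts]
    positivity
  have hvolNnn : ∀ t : ℝ, 0 ≤ volN V (-ε) t := by
    intro t; rw [volN]; positivity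
  have hfub : ∀ t : ℝ, 0 < t → volN V (-ε) t
      ≤ (2 * Real.pi)⁻¹ * (2 * R t * (2 * R t)) := by
    intro t ht
    rw [volN]
    refine mul_le_mul_of_nonneg_left ?_ (by positivity)
    have hsub : {p : ℝ × ℝ | V p.1 p.2 > t ∧ p.1 > -ε}
        ⊆ Set.Ioo (-(R t)) (R t) ×ˢ Set.Ioo (-(R t)) (R t) := by
      rintro ⟨y, ξ⟩ ⟨h1, _⟩
      obtain ⟨hy, hξ⟩ := habs t ht y ξ h1
      exact ⟨abs_lt.mp hy |>.imp id id, abs_lt.mp hξ |>.imp id id⟩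
    have hfin2 : volume (Set.Ioo (-(R t)) (R t) ×ˢ Set.Ioo (-(R t)) (R t)) ≠ ⊤ := by
      rw [Measure.volume_eq_prod ℝ ℝ, Measure.prod_prod]
      exact ENNReal.mul_ne_top measure_Ioo_lt_top.ne measure_Ioo_lt_top.ne
    refine le_trans (ENNReal.toReal_mono hfin2 (measure_mono hsub)) ?_
    rw [Measure.volume_eq_prod ℝ ℝ, Measure.prod_prod, Real.volume_Ioo,
      show R t - -(R t) = 2 * R t by ring, ← ENNReal.ofReal_mul (by positivity),
      ENNReal.toReal_ofReal (by positivity)]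
  -- the final limit argument
  rw [HomCond, Metric.tendsto_nhds] at hhom ⊢
  intro δ hδ
  have hδ' : 0 < δ / (2 * (Bp + 1)) := by positivity
  have h1 := hhom _ hδ'
  have h2 : Set.Ioo (0:ℝ) 1 ∈ 𝓝[>] (0:ℝ) :=
    Ioo_mem_nhdsGT_of_mem ⟨le_refl 0, one_pos⟩
  filter_upwards [h1, h2] with ϵ hϵdist hϵmem
  obtain ⟨hϵ0, hϵ1⟩ := hϵmem
  rw [Real.dist_eq, sub_zero] at hϵdist ⊢
  -- the eventual bound on the F-term
  have hFnn : ∀ᶠ lam in 𝓝[>] (0:ℝ), 0 ≤ lam ^ (2 / m) *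
      (volN V (-ε) (lam * (1 - ϵ)) - volN V (-ε) (lam * (1 + ϵ))) := by
    filter_upwards [self_mem_nhdsWithin] with lam hlam
    have hlam0 : (0:ℝ) < lam := hlam
    have ha : 0 < lam * (1 - ϵ) := by nlinarith
    have hac : lam * (1 - ϵ) ≤ lam * (1 + ϵ) := by nlinarith
    exact mul_nonneg (Real.rpow_nonneg hlam0.le _) (hfnn _ _ ha hac)
  have hc1 : (0:ℝ) < 1 - ϵ := by linarith
  have hFub : ∀ᶠ lam in 𝓝[>] (0:ℝ), lam ^ (2 / m) *
      (volN V (-ε) (lam * (1 - ϵ)) - volN V (-ε) (lam * (1 + ϵ)))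
      ≤ (2 * Real.pi)⁻¹ * (4 * (C₀ / (1 - ϵ)) ^ (2 / m)) := by
    filter_upwards [self_mem_nhdsWithin] with lam hlam
    have hlam0 : (0:ℝ) < lam := hlam
    have ha : 0 < lam * (1 - ϵ) := by nlinarith
    have h1 : volN V (-ε) (lam * (1 - ϵ)) - volN V (-ε) (lam * (1 + ϵ))
        ≤ (2 * Real.pi)⁻¹ * (2 * R (lam * (1 - ϵ)) * (2 * R (lam * (1 - ϵ)))) :=
      le_trans (by linarith [hvolNnn (lam * (1 + ϵ))]) (hfub _ ha)
    have h2 := mul_le_mul_of_nonneg_left h1 (Real.rpow_nonneg hlam0.le (2 / m))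
    refine le_trans h2 (le_of_eq ?_)
    have hRsq : R (lam * (1 - ϵ)) * R (lam * (1 - ϵ))
        = (C₀ / (lam * (1 - ϵ))) ^ (2 / m) := by
      rw [hR]
      exact Real.mul_self_sqrt (by positivity)
    have hkey : lam ^ (2 / m) * (C₀ / (lam * (1 - ϵ))) ^ (2 / m)
        = (C₀ / (1 - ϵ)) ^ (2 / m) := by
      rw [← Real.mul_rpow hlam0.le (by positivity)]
      congr 1
      rw [div_mul_eq_div_div, div_right_comm, mul_comm lam (C₀ / (1 - ϵ) / lam),
        div_mul_cancel₀ _ hlam0.ne']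
    calc lam ^ (2 / m) * ((2 * Real.pi)⁻¹ *
          (2 * R (lam * (1 - ϵ)) * (2 * R (lam * (1 - ϵ)))))
        = (2 * Real.pi)⁻¹ * (4 * (lam ^ (2 / m) *
            (R (lam * (1 - ϵ)) * R (lam * (1 - ϵ))))) := by ring
      _ = (2 * Real.pi)⁻¹ * (4 * (C₀ / (1 - ϵ)) ^ (2 / m)) := by rw [hRsq, hkey]
  have hFev : ∀ᶠ lam in 𝓝[>] (0:ℝ), lam ^ (2 / m) *
      (volN V (-ε) (lam * (1 - ϵ)) - volN V (-ε) (lam * (1 + ϵ))) < δ / (2 * (Bp + 1)) :=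
    eventually_lt_of_limsup_lt (lt_of_abs_lt hϵdist)
      (isBoundedUnder_of_eventually_le hFub)
  -- the strip term tends to zero
  have hSev : ∀ᶠ lam in 𝓝[>] (0:ℝ),
      lam ^ (2 / m) * ((2 * Real.pi)⁻¹ * (Bp * (ε * (2 * R (lam * (1 - ϵ)))))) < δ / 2 := by
    set c2 : ℝ := (2 * Real.pi)⁻¹ * (Bp * (ε * 2)) * (C₀ / (1 - ϵ)) ^ (1 / m) with hc2
    have hbase : Tendsto (fun lam : ℝ => lam ^ (1 / m)) (𝓝[>] (0:ℝ)) (𝓝 0) := by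
      have hco : ContinuousAt (fun x : ℝ => x ^ (1 / m)) 0 :=
        Real.continuousAt_rpow_const 0 (1 / m) (Or.inr (by positivity))
      have h := hco.tendsto
      rw [Real.zero_rpow (by positivity : (1:ℝ) / m ≠ 0)] at h
      exact h.mono_left nhdsWithin_le_nhds
    have htend : Tendsto (fun lam : ℝ => c2 * lam ^ (1 / m)) (𝓝[>] (0:ℝ)) (𝓝 0) := by
      have := hbase.const_mul c2
      simpa using this
    filter_upwards [self_mem_nhdsWithin, htend.eventually (Iio_mem_nhds (half_pos hδ))]
      with lam hlam hsmall
    have hlam0 : (0:ℝ) < lam := hlam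
    have heq : lam ^ (2 / m) * ((2 * Real.pi)⁻¹ * (Bp * (ε * (2 * R (lam * (1 - ϵ))))))
        = c2 * lam ^ (1 / m) := by
      have hxpos : (0:ℝ) < C₀ / (lam * (1 - ϵ)) := by positivity
      have hRa : R (lam * (1 - ϵ)) = (C₀ / (1 - ϵ)) ^ (1 / m) * (lam ^ (1 / m))⁻¹ := by
        rw [hR]
        simp only
        rw [show C₀ / (lam * (1 - ϵ)) = (C₀ / (1 - ϵ)) * lam⁻¹ by
            rw [div_mul_eq_div_div, div_right_comm, div_eq_mul_inv],
          Real.sqrt_eq_rpow, ← Real.rpow_mul (by positivity),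
          show (2 / m) * (1 / 2) = 1 / m by ring,
          Real.mul_rpow (by positivity) (by positivity),
          Real.inv_rpow hlam0.le]
      have hpow : lam ^ (2 / m : ℝ) = lam ^ (1 / m : ℝ) * lam ^ (1 / m : ℝ) := by
        rw [← Real.rpow_add hlam0]
        congr 1
        ring
      have hlpow : (0:ℝ) < lam ^ (1 / m : ℝ) := Real.rpow_pos_of_pos hlam0 _
      rw [hRa, hpow, hc2]
      field_simp
    rw [heq]
    exact hsmall
  -- combine
  have hδ'' : Bp * (δ / (2 * (Bp + 1))) + δ / 2 < δ := by
    have h3 : Bp * (δ / (2 * (Bp + 1))) < δ / 2 := by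
      rw [mul_div_assoc', div_lt_div_iff₀ (by positivity) (by norm_num : (0:ℝ) < 2)]
      nlinarith
    linarith
  have hGev : ∀ᶠ lam in 𝓝[>] (0:ℝ),
      lam ^ (2 / m) * (volNa (fun x ξ => χ (β x) * V (β x) (-ξ)) (lam * (1 - ϵ))
        - volNa (fun x ξ => χ (β x) * V (β x) (-ξ)) (lam * (1 + ϵ)))
      ≤ Bp * (δ / (2 * (Bp + 1))) + δ / 2 := by
    filter_upwards [self_mem_nhdsWithin, hFev, hSev] with lam hlam hF hS
    have hlam0 : (0:ℝ) < lam := hlam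
    have hcore' := hcore lam hlam0 ϵ hϵ0 hϵ1
    have hstep : lam ^ (2 / m) * (volNa (fun x ξ => χ (β x) * V (β x) (-ξ)) (lam * (1 - ϵ))
        - volNa (fun x ξ => χ (β x) * V (β x) (-ξ)) (lam * (1 + ϵ)))
        ≤ Bp * (lam ^ (2 / m) * (volN V (-ε) (lam * (1 - ϵ)) - volN V (-ε) (lam * (1 + ϵ))))
          + lam ^ (2 / m) * ((2 * Real.pi)⁻¹ * (Bp * (ε * (2 * R (lam * (1 - ϵ)))))) := by
      have := mul_le_mul_of_nonneg_left hcore' (Real.rpow_nonneg hlam0.le (2 / m))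
      calc lam ^ (2 / m) * (volNa (fun x ξ => χ (β x) * V (β x) (-ξ)) (lam * (1 - ϵ))
            - volNa (fun x ξ => χ (β x) * V (β x) (-ξ)) (lam * (1 + ϵ)))
          ≤ lam ^ (2 / m) * (Bp * (volN V (-ε) (lam * (1 - ϵ)) - volN V (-ε) (lam * (1 + ϵ)))
              + (2 * Real.pi)⁻¹ * (Bp * (ε * (2 * R (lam * (1 - ϵ)))))) := this
        _ = Bp * (lam ^ (2 / m) * (volN V (-ε) (lam * (1 - ϵ)) - volN V (-ε) (lam * (1 + ϵ))))
              + lam ^ (2 / m) * ((2 * Real.pi)⁻¹ * (Bp * (ε * (2 * R (lam * (1 - ϵ)))))) := by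
            ring
    refine le_trans hstep ?_
    have hBpF : Bp * (lam ^ (2 / m) *
        (volN V (-ε) (lam * (1 - ϵ)) - volN V (-ε) (lam * (1 + ϵ))))
        ≤ Bp * (δ / (2 * (Bp + 1))) := mul_le_mul_of_nonneg_left hF.le hBp.le
    linarith
  have hGnn : ∀ᶠ lam in 𝓝[>] (0:ℝ),
      0 ≤ lam ^ (2 / m) * (volNa (fun x ξ => χ (β x) * V (β x) (-ξ)) (lam * (1 - ϵ))
        - volNa (fun x ξ => χ (β x) * V (β x) (-ξ)) (lam * (1 + ϵ))) := by
    filter_upwards [self_mem_nhdsWithin] with lam hlam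
    have hlam0 : (0:ℝ) < lam := hlam
    have ha : 0 < lam * (1 - ϵ) := by nlinarith
    have hac : lam * (1 - ϵ) ≤ lam * (1 + ϵ) := by nlinarith
    exact mul_nonneg (Real.rpow_nonneg hlam0.le _) (hgnn _ _ ha hac)
  have hub : limsup (fun lam : ℝ => lam ^ (2 / m) *
      (volNa (fun x ξ => χ (β x) * V (β x) (-ξ)) (lam * (1 - ϵ))
        - volNa (fun x ξ => χ (β x) * V (β x) (-ξ)) (lam * (1 + ϵ)))) (𝓝[>] (0:ℝ))
      ≤ Bp * (δ / (2 * (Bp + 1))) + δ / 2 :=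
    limsup_le_of_le (isCoboundedUnder_le_of_eventually_le _ hGnn) hGev
  have hlb : 0 ≤ limsup (fun lam : ℝ => lam ^ (2 / m) *
      (volNa (fun x ξ => χ (β x) * V (β x) (-ξ)) (lam * (1 - ϵ))
        - volNa (fun x ξ => χ (β x) * V (β x) (-ξ)) (lam * (1 + ϵ)))) (𝓝[>] (0:ℝ)) :=
    le_limsup_of_frequently_le hGnn.frequently (isBoundedUnder_of_eventually_le hGev)
  rw [abs_of_nonneg hlb]
  exact lt_of_le_of_lt hub hδ''
end

section
/- Let m > 0, C₀ > 0, and let V : ℝ² → [0,∞) be measurable with V(x,ξ) ≤ C₀(1+x²+ξ²)^{−m/2} for all (x,ξ). Fix ε > 0 and a continuous χ_ε : ℝ → [0,1] with χ_ε = 0 on (−∞,−2ε] and χ_ε = 1 on [−ε,∞), and set V_ε(x,ξ) := χ_ε(x)V(x,ξ). Assume there exist c > 0 and λ₀ > 0 such that N(λ,V,0) ≥ c·λ^{−2/m} for all 0 < λ < λ₀. Then lim_{λ↓0} N(λ,V_ε)/N(λ,V,0) = 1, where N(λ,V_ε) := (2π)^{−1}·vol{(x,ξ) ∈ ℝ²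 : V_ε(x,ξ) > λ}. -/
open MeasureTheory Filter Topology

set_option maxHeartbeats 1000000 in
private lemma stmt_12_aux (m C₀ : ℝ) (hm : 0 < m) (hC₀ : 0 < C₀)
    (V : ℝ → ℝ → ℝ)
    (hVnn : ∀ x ξ : ℝ, 0 ≤ V x ξ)
    (hVbd : ∀ x ξ : ℝ, V x ξ ≤ C₀ * (1 + x ^ 2 + ξ ^ 2) ^ (-(m / 2)))
    (ε : ℝ) (hε : 0 < ε) (χ : ℝ → ℝ)
    (hχ01 : ∀ x, 0 ≤ χ x ∧ χ x ≤ 1)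
    (hχ0 : ∀ x, x ≤ -2 * ε → χ x = 0) (hχ1 : ∀ x, -ε ≤ x → χ x = 1)
    (c : ℝ) (hc : 0 < c) (lam₀ : ℝ)
    (hlow : ∀ lam : ℝ, 0 < lam → lam < lam₀ → c * lam ^ (-(2 / m)) ≤ volN V 0 lam) :
    ∀ lam : ℝ, lam ∈ Set.Ioo (0:ℝ) lam₀ →
      1 ≤ volNa (fun x ξ => χ x * V x ξ) lam / volN V 0 lam ∧
      volNa (fun x ξ => χ x * V x ξ) lam / volN V 0 lam
        ≤ 1 + (2 * Real.pi)⁻¹ * (4 * ε * C₀ ^ ((1:ℝ)/m)) / c * lam ^ ((1:ℝ)/m) := by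
  have hπpos : (0:ℝ) < Real.pi := Real.pi_pos
  have hπ : (0:ℝ) < (2 * Real.pi)⁻¹ := by positivity
  set K : ℝ := (2 * Real.pi)⁻¹ * (4 * ε * C₀ ^ ((1:ℝ)/m)) / c with hKdef
  rintro lam ⟨hl, hl'⟩
  set R : ℝ := (C₀ / lam) ^ ((1:ℝ)/m) with hRdef
  have hR : 0 < R := Real.rpow_pos_of_pos (by positivity) _
  have key : ∀ x ξ : ℝ, lam < V x ξ → x ^ 2 < R ^ 2 ∧ ξ ^ 2 < R ^ 2 := by
    intro x ξ h
    have ht : (0:ℝ) < 1 + x ^ 2 + ξ ^ 2 := by positivity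
    have h1 : lam < C₀ * (1 + x ^ 2 + ξ ^ 2) ^ (-(m/2)) := lt_of_lt_of_le h (hVbd x ξ)
    have hu : (0:ℝ) < (1 + x ^ 2 + ξ ^ 2) ^ (m/2) := Real.rpow_pos_of_pos ht _
    have h2 : (1 + x ^ 2 + ξ ^ 2) ^ (m/2) < C₀ / lam := by
      rw [Real.rpow_neg ht.le] at h1
      have h1' : lam * (1 + x ^ 2 + ξ ^ 2) ^ (m/2) < C₀ := by
        have := mul_lt_mul_of_pos_right h1 hu
        rwa [mul_assoc, inv_mul_cancel₀ hu.ne', mul_one] at this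
      rw [lt_div_iff₀ hl]
      linarith
    have h3 : 1 + x ^ 2 + ξ ^ 2 < (C₀ / lam) ^ ((2:ℝ)/m) := by
      have := Real.rpow_lt_rpow hu.le h2 (by positivity : (0:ℝ) < 2/m)
      rwa [← Real.rpow_mul ht.le, show m/2 * (2/m) = 1 by field_simp, Real.rpow_one] at this
    have hR2 : R ^ 2 = (C₀ / lam) ^ ((2:ℝ)/m) := by
      rw [hRdef, ← Real.rpow_natCast ((C₀/lam) ^ ((1:ℝ)/m)) 2,
        ← Real.rpow_mul (by positivity : (0:ℝ) ≤ C₀ / lam)]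
      norm_num
      rw [show (m⁻¹ * 2 : ℝ) = 2/m by ring]
    rw [hR2]
    exact ⟨by nlinarith, by nlinarith⟩
  set A : Set (ℝ × ℝ) := {p | V p.1 p.2 > lam ∧ p.1 > 0} with hAdef
  set B : Set (ℝ × ℝ) := {p | χ p.1 * V p.1 p.2 > lam} with hBdef
  set T : Set (ℝ × ℝ) := Set.Ioc (-(2*ε)) 0 ×ˢ Set.Icc (-R) R with hTdef
  set Sq : Set (ℝ × ℝ) := Set.Icc (-R) R ×ˢ Set.Icc (-R) R with hSqdef
  have hAB : A ⊆ B := by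
    rintro ⟨x, ξ⟩ ⟨h1, h2⟩
    have hx1 : χ x = 1 := hχ1 x (by linarith)
    show lam < χ x * V x ξ
    rw [hx1, one_mul]; exact h1
  have hfromB : ∀ p : ℝ × ℝ, p ∈ B → lam < V p.1 p.2 ∧ -(2*ε) < p.1 := by
    rintro ⟨x, ξ⟩ hp
    have hp' : lam < χ x * V x ξ := hp
    have hV : lam < V x ξ :=
      lt_of_lt_of_le hp' (mul_le_of_le_one_left (hVnn x ξ) (hχ01 x).2)
    refine ⟨hV, ?_⟩
    by_contra hx
    push_neg at hx
    rw [hχ0 x (by linarith), zero_mul] at hp'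
    linarith
  have hBsub : B ⊆ A ∪ T := by
    rintro ⟨x, ξ⟩ hp
    obtain ⟨hV, hx⟩ := hfromB _ hp
    rcases le_or_gt x 0 with hx0 | hx0
    · right
      have hξ := (key x ξ hV).2
      exact ⟨⟨hx, hx0⟩, ⟨by nlinarith [sq_nonneg (ξ + R)], by nlinarith [sq_nonneg (ξ - R)]⟩⟩
    · left; exact ⟨hV, hx0⟩
  have hAsub : A ⊆ Sq := by
    rintro ⟨x, ξ⟩ ⟨h1, _⟩
    obtain ⟨hx2, hξ2⟩ := key x ξ h1
    exact ⟨⟨by nlinarith [sq_nonneg (x + R)], by nlinarith [sq_nonneg (x - R)]⟩,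
      ⟨by nlinarith [sq_nonneg (ξ + R)], by nlinarith [sq_nonneg (ξ - R)]⟩⟩
  have hTvol : volume T = ENNReal.ofReal (2*ε) * ENNReal.ofReal (2*R) := by
    rw [hTdef, Measure.volume_eq_prod, Measure.prod_prod, Real.volume_Ioc, Real.volume_Icc,
      show (0:ℝ) - (-(2*ε)) = 2*ε by ring, show R - (-R) = 2*R by ring]
  have hSqvol : volume Sq = ENNReal.ofReal (2*R) * ENNReal.ofReal (2*R) := by
    rw [hSqdef, Measure.volume_eq_prod, Measure.prod_prod, Real.volume_Icc,
      show R - (-R) = 2*R by ring]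
  have hμA_fin : volume A ≠ ⊤ :=
    ne_top_of_le_ne_top
      (by rw [hSqvol]; exact ENNReal.mul_ne_top ENNReal.ofReal_ne_top ENNReal.ofReal_ne_top)
      (measure_mono hAsub)
  have hμT_fin : volume T ≠ ⊤ := by
    rw [hTvol]; exact ENNReal.mul_ne_top ENNReal.ofReal_ne_top ENNReal.ofReal_ne_top
  have hμB_le : volume B ≤ volume A + volume T :=
    (measure_mono hBsub).trans (measure_union_le _ _)
  have hμB_fin : volume B ≠ ⊤ :=
    ne_top_of_le_ne_top (ENNReal.add_ne_top.mpr ⟨hμA_fin, hμT_fin⟩) hμB_le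
  have ha_eq : volN V 0 lam = (2 * Real.pi)⁻¹ * (volume A).toReal := rfl
  have hb_eq : volNa (fun x ξ => χ x * V x ξ) lam = (2 * Real.pi)⁻¹ * (volume B).toReal := rfl
  have halow : c * lam ^ (-(2/m)) ≤ volN V 0 lam := hlow lam hl hl'
  have hlampow : (0:ℝ) < lam ^ (-(2/m)) := Real.rpow_pos_of_pos hl _
  have hapos : 0 < volN V 0 lam := lt_of_lt_of_le (by positivity) halow
  have hab : volN V 0 lam ≤ volNa (fun x ξ => χ x * V x ξ) lam := by
    rw [ha_eq, hb_eq]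
    exact mul_le_mul_of_nonneg_left
      (ENNReal.toReal_mono hμB_fin (measure_mono hAB)) hπ.le
  have hb_le : volNa (fun x ξ => χ x * V x ξ) lam
      ≤ volN V 0 lam + (2 * Real.pi)⁻¹ * (4 * ε * R) := by
    rw [ha_eq, hb_eq]
    have h1 : (volume B).toReal ≤ (volume A).toReal + (volume T).toReal := by
      rw [← ENNReal.toReal_add hμA_fin hμT_fin]
      exact ENNReal.toReal_mono (ENNReal.add_ne_top.mpr ⟨hμA_fin, hμT_fin⟩) hμB_le
    have h2 : (volume T).toReal = 4 * ε * R := by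
      rw [hTvol, ENNReal.toReal_mul, ENNReal.toReal_ofReal (by positivity),
        ENNReal.toReal_ofReal (by positivity)]
      ring
    calc (2 * Real.pi)⁻¹ * (volume B).toReal
        ≤ (2 * Real.pi)⁻¹ * ((volume A).toReal + 4 * ε * R) :=
          mul_le_mul_of_nonneg_left (by rw [← h2]; exact h1) hπ.le
      _ = (2 * Real.pi)⁻¹ * (volume A).toReal + (2 * Real.pi)⁻¹ * (4 * ε * R) := by ring
  have hDnn : (0:ℝ) ≤ (2 * Real.pi)⁻¹ * (4 * ε * R) := by positivity
  constructor
  · exact (one_le_div hapos).mpr hab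
  · have step1 : volNa (fun x ξ => χ x * V x ξ) lam / volN V 0 lam
        ≤ 1 + (2 * Real.pi)⁻¹ * (4 * ε * R) / volN V 0 lam := by
      have e : (volN V 0 lam + (2 * Real.pi)⁻¹ * (4 * ε * R)) / volN V 0 lam
          = 1 + (2 * Real.pi)⁻¹ * (4 * ε * R) / volN V 0 lam := by
        rw [add_div, div_self hapos.ne']
      rw [← e]
      gcongr
    have step2 : (2 * Real.pi)⁻¹ * (4 * ε * R) / volN V 0 lam
        ≤ (2 * Real.pi)⁻¹ * (4 * ε * R) / (c * lam ^ (-(2/m))) := by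
      gcongr
    have step3 : (2 * Real.pi)⁻¹ * (4 * ε * R) / (c * lam ^ (-(2/m)))
        = K * lam ^ ((1:ℝ)/m) := by
      have hu : (0:ℝ) < lam ^ ((1:ℝ)/m) := Real.rpow_pos_of_pos hl _
      have e1 : lam ^ (-(2/m)) * (lam ^ ((1:ℝ)/m) * lam ^ ((1:ℝ)/m)) = 1 := by
        rw [← Real.rpow_add hl, ← Real.rpow_add hl,
          show -(2/m) + ((1:ℝ)/m + 1/m) = 0 by ring, Real.rpow_zero]
      have e2 : R = C₀ ^ ((1:ℝ)/m) / lam ^ ((1:ℝ)/m) := by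
        rw [hRdef]; exact Real.div_rpow hC₀.le hl.le _
      have hv : lam ^ (-(2/m)) = (lam ^ ((1:ℝ)/m) * lam ^ ((1:ℝ)/m))⁻¹ :=
        eq_inv_of_mul_eq_one_left e1
      have gen : ∀ u P q : ℝ, u ≠ 0 → q ≠ 0 →
          (2 * Real.pi)⁻¹ * (4 * ε * (P / u)) / (q * (u * u)⁻¹)
            = (2 * Real.pi)⁻¹ * (4 * ε * P) / q * u := by
        intro u P q hu0 hq0
        field_simp
      rw [e2, hv, hKdef]
      exact gen _ _ _ hu.ne' hc.ne'
    linarith [step1, step2.trans_eq step3]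


/-- For a power-like bounded `V ≥ 0` with
`N(λ,V,0) ≥ c λ^{−2/m}` near `0`, and the cut-off `V_ε(x,ξ) = χ_ε(x)V(x,ξ)`, one has
`lim_{λ↓0} N(λ,V_ε)/N(λ,V,0) = 1`. -/
theorem stmt_12 (m C₀ : ℝ) (hm : 0 < m) (hC₀ : 0 < C₀)
    (V : ℝ → ℝ → ℝ) (hVmeas : Measurable (fun p : ℝ × ℝ => V p.1 p.2))
    (hVnn : ∀ x ξ : ℝ, 0 ≤ V x ξ)
    (hVbd : ∀ x ξ : ℝ, V x ξ ≤ C₀ * (1 + x ^ 2 + ξ ^ 2) ^ (-(m / 2)))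
    (ε : ℝ) (hε : 0 < ε) (χ : ℝ → ℝ) (hχc : Continuous χ)
    (hχ01 : ∀ x, 0 ≤ χ x ∧ χ x ≤ 1)
    (hχ0 : ∀ x, x ≤ -2 * ε → χ x = 0) (hχ1 : ∀ x, -ε ≤ x → χ x = 1)
    (hlow : ∃ c > (0:ℝ), ∃ lam₀ > (0:ℝ), ∀ lam : ℝ, 0 < lam → lam < lam₀ →
      c * lam ^ (-(2 / m)) ≤ volN V 0 lam) :
    Tendsto (fun lam => volNa (fun x ξ => χ x * V x ξ) lam / volN V 0 lam)
      (𝓝[>] (0:ℝ)) (𝓝 1) := by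
  obtain ⟨c, hc, lam₀, hlam₀, hlow⟩ := hlow
  set K : ℝ := (2 * Real.pi)⁻¹ * (4 * ε * C₀ ^ ((1:ℝ)/m)) / c with hKdef
  have main := stmt_12_aux m C₀ hm hC₀ V hVnn hVbd ε hε χ hχ01 hχ0 hχ1 c hc lam₀ hlow
  have h0 : Tendsto (fun lam : ℝ => lam ^ ((1:ℝ)/m)) (𝓝[>] (0:ℝ)) (𝓝 0) := by
    have hca : ContinuousAt (fun x : ℝ => x ^ ((1:ℝ)/m)) 0 :=
      Real.continuousAt_rpow_const 0 (1/m) (Or.inr (by positivity))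
    have h := hca.tendsto
    rw [Real.zero_rpow (by positivity : (1:ℝ)/m ≠ 0)] at h
    exact h.mono_left nhdsWithin_le_nhds
  have hupper : Tendsto (fun lam : ℝ => 1 + K * lam ^ ((1:ℝ)/m)) (𝓝[>] (0:ℝ)) (𝓝 1) := by
    have := (tendsto_const_nhds (x := (1:ℝ))).add ((tendsto_const_nhds (x := K)).mul h0)
    simpa using this
  have hev : Set.Ioo (0:ℝ) lam₀ ∈ 𝓝[>] (0:ℝ) :=
    Ioo_mem_nhdsGT_of_mem ⟨le_rfl, hlam₀⟩
  refine tendsto_of_tendsto_of_tendsto_of_le_of_le' tendsto_const_nhds hupper ?_ ?_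
  · filter_upwards [hev] with lam hlam
    exact (main lam hlam).1
  · filter_upwards [hev] with lam hlam
    exact (main lam hlam).2
end

section
/- Let m > 0, C₀ > 0, and let V : ℝ² → [0,∞) be measurable with V(x,ξ) ≤ C₀(1+x²+ξ²)^{−m/2} for all (x,ξ). Suppose that for some s₀ ∈ ℝ there are c > 0 and λ₀ > 0 with N(λ,V,s₀) ≥ c·λ^{−2/m} for all 0 < λ < λ₀. Then for every s ∈ ℝ one has lim_{λ↓0} N(λ,V,s)/N(λ,V,s₀) = 1. -/
open MeasureTheory Filter Topology

/-- If `V ≥ 0` is measurable with `V(x,ξ) ≤ C₀⟨x,ξ⟩^{−m}` and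
`N(λ,V,s₀) ≥ c λ^{−2/m}` near `0` for some `s₀`, then for every `s`,
`lim_{λ↓0} N(λ,V,s)/N(λ,V,s₀) = 1`. -/
theorem stmt_14 (m C₀ : ℝ) (hm : 0 < m) (hC₀ : 0 < C₀)
    (V : ℝ → ℝ → ℝ) (hVmeas : Measurable (fun p : ℝ × ℝ => V p.1 p.2))
    (hVnn : ∀ x ξ : ℝ, 0 ≤ V x ξ)
    (hVbd : ∀ x ξ : ℝ, V x ξ ≤ C₀ * (1 + x ^ 2 + ξ ^ 2) ^ (-(m / 2)))
    (s₀ : ℝ)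
    (hlow : ∃ c > (0:ℝ), ∃ lam₀ > (0:ℝ), ∀ lam : ℝ, 0 < lam → lam < lam₀ →
      c * lam ^ (-(2 / m)) ≤ volN V s₀ lam) :
    ∀ s : ℝ, Tendsto (fun lam => volN V s lam / volN V s₀ lam) (𝓝[>] (0:ℝ)) (𝓝 1) := by
  obtain ⟨c, hc, lam₀, hlam₀, hlow⟩ := hlow
  intro s
  set a := min s s₀ with ha
  set b := max s s₀ with hb
  have hab : a ≤ b := min_le_max
  -- key pointwise bound
  have key : ∀ lam : ℝ, 0 < lam → ∀ x ξ : ℝ, lam < V x ξ →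
      x ^ 2 < (C₀ / lam) ^ ((2:ℝ) / m) ∧ ξ ^ 2 < (C₀ / lam) ^ ((2:ℝ) / m) := by
    intro lam hlam x ξ h
    have ht : (0:ℝ) < 1 + x ^ 2 + ξ ^ 2 := by positivity
    have htp : 0 < (1 + x ^ 2 + ξ ^ 2) ^ (m / 2) := Real.rpow_pos_of_pos ht _
    have h1 : lam < C₀ * (1 + x ^ 2 + ξ ^ 2) ^ (-(m / 2)) := h.trans_le (hVbd x ξ)
    have h2 : (1 + x ^ 2 + ξ ^ 2) ^ (m / 2) < C₀ / lam := by
      rw [Real.rpow_neg ht.le, ← div_eq_mul_inv] at h1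
      rw [lt_div_iff₀ hlam]
      have := (lt_div_iff₀ htp).mp h1
      nlinarith
    have h3 : 1 + x ^ 2 + ξ ^ 2 < (C₀ / lam) ^ ((2:ℝ) / m) := by
      have hh := Real.rpow_lt_rpow htp.le h2 (by positivity : (0:ℝ) < 2 / m)
      rwa [← Real.rpow_mul ht.le, show m / 2 * (2 / m) = 1 by field_simp,
        Real.rpow_one] at hh
    constructor <;> nlinarith [sq_nonneg x, sq_nonneg ξ]
  -- absolute difference bound
  have habs : ∀ lam : ℝ, 0 < lam →
      |volN V s lam - volN V s₀ lam| ≤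
        (2 * Real.pi)⁻¹ * ((b - a) * (2 * Real.sqrt ((C₀ / lam) ^ ((2:ℝ) / m)))) := by
    intro lam hlam
    set R := (C₀ / lam) ^ ((2:ℝ) / m) with hR
    have hRnn : 0 ≤ R := Real.rpow_nonneg (by positivity) _
    set r := Real.sqrt R with hr
    have hrnn : 0 ≤ r := Real.sqrt_nonneg _
    have habslt : ∀ x : ℝ, x ^ 2 < R → -r < x ∧ x < r := by
      intro x hx
      have h1 : Real.sqrt (x ^ 2) < r := Real.sqrt_lt_sqrt (sq_nonneg _) hx
      rw [Real.sqrt_sq_eq_abs] at h1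
      exact abs_lt.mp h1
    set Sq := Set.Ioo (-r) r ×ˢ Set.Ioo (-r) r with hSq
    set strip := Set.Ioc a b ×ˢ Set.Ioo (-r) r with hstrip
    have hsub : ∀ sv : ℝ, {p : ℝ × ℝ | V p.1 p.2 > lam ∧ p.1 > sv} ⊆ Sq := by
      rintro sv p ⟨hp, -⟩
      obtain ⟨h1, h2⟩ := key lam hlam p.1 p.2 hp
      exact ⟨habslt _ h1, habslt _ h2⟩
    have hSqfin : volume Sq < ⊤ := by
      rw [hSq, Measure.volume_eq_prod, Measure.prod_prod, Real.volume_Ioo]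
      exact ENNReal.mul_lt_top ENNReal.ofReal_lt_top ENNReal.ofReal_lt_top
    have hstripvol : volume strip = ENNReal.ofReal (b - a) * ENNReal.ofReal (2 * r) := by
      rw [hstrip, Measure.volume_eq_prod, Measure.prod_prod, Real.volume_Ioo,
        Real.volume_Ioc]
      congr 1
      rw [sub_neg_eq_add, two_mul]
    have hstripfin : volume strip ≠ ⊤ := by
      rw [hstripvol]
      exact ENNReal.mul_ne_top ENNReal.ofReal_ne_top ENNReal.ofReal_ne_top
    set A := {p : ℝ × ℝ | V p.1 p.2 > lam ∧ p.1 > s} with hA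
    set B := {p : ℝ × ℝ | V p.1 p.2 > lam ∧ p.1 > s₀} with hB
    have hAfin : volume A ≠ ⊤ := ((measure_mono (hsub s)).trans_lt hSqfin).ne
    have hBfin : volume B ≠ ⊤ := ((measure_mono (hsub s₀)).trans_lt hSqfin).ne
    have incl1 : A ⊆ B ∪ strip := by
      rintro p ⟨hV, hx⟩
      by_cases h : p.1 > s₀
      · exact Or.inl ⟨hV, h⟩
      · refine Or.inr ⟨⟨lt_of_le_of_lt (min_le_left _ _) hx,
          le_trans (not_lt.mp h) (le_max_right _ _)⟩,
          Set.mem_Ioo.mpr (habslt _ (key lam hlam p.1 p.2 hV).2)⟩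
    have incl2 : B ⊆ A ∪ strip := by
      rintro p ⟨hV, hx⟩
      by_cases h : p.1 > s
      · exact Or.inl ⟨hV, h⟩
      · refine Or.inr ⟨⟨lt_of_le_of_lt (min_le_right _ _) hx,
          le_trans (not_lt.mp h) (le_max_left _ _)⟩,
          Set.mem_Ioo.mpr (habslt _ (key lam hlam p.1 p.2 hV).2)⟩
    have hm1 : volume A ≤ volume B + volume strip :=
      (measure_mono incl1).trans (measure_union_le _ _)
    have hm2 : volume B ≤ volume A + volume strip :=
      (measure_mono incl2).trans (measure_union_le _ _)
    have hS : (volume strip).toReal = (b - a) * (2 * r) := by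
      rw [hstripvol, ENNReal.toReal_mul, ENNReal.toReal_ofReal (by linarith),
        ENNReal.toReal_ofReal (by positivity)]
    have ht1 : (volume A).toReal ≤ (volume B).toReal + (volume strip).toReal := by
      rw [← ENNReal.toReal_add hBfin hstripfin]
      exact ENNReal.toReal_mono (ENNReal.add_ne_top.mpr ⟨hBfin, hstripfin⟩) hm1
    have ht2 : (volume B).toReal ≤ (volume A).toReal + (volume strip).toReal := by
      rw [← ENNReal.toReal_add hAfin hstripfin]
      exact ENNReal.toReal_mono (ENNReal.add_ne_top.mpr ⟨hAfin, hstripfin⟩) hm2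
    have hdiff : |(volume A).toReal - (volume B).toReal| ≤ (b - a) * (2 * r) := by
      rw [abs_sub_le_iff]
      constructor <;> linarith [hS ▸ ht1, hS ▸ ht2]
    have hpi : (0:ℝ) < (2 * Real.pi)⁻¹ := by positivity
    calc |volN V s lam - volN V s₀ lam|
        = (2 * Real.pi)⁻¹ * |(volume A).toReal - (volume B).toReal| := by
          rw [volN, volN, ← mul_sub, abs_mul, abs_of_pos hpi]
      _ ≤ (2 * Real.pi)⁻¹ * ((b - a) * (2 * r)) := by
          exact mul_le_mul_of_nonneg_left hdiff hpi.le
  -- rewrite r in terms of lam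
  have hrval : ∀ lam : ℝ, 0 < lam →
      Real.sqrt ((C₀ / lam) ^ ((2:ℝ) / m)) = C₀ ^ ((1:ℝ)/m) * lam ^ (-(1/m)) := by
    intro lam hlam
    have hq : (0:ℝ) ≤ C₀ / lam := by positivity
    rw [Real.sqrt_eq_rpow, ← Real.rpow_mul hq, show (2:ℝ) / m * (1/2) = 1/m by ring,
      Real.div_rpow hC₀.le hlam.le, Real.rpow_neg hlam.le, div_eq_mul_inv]
  set D : ℝ := (2 * Real.pi)⁻¹ * ((b - a) * (2 * C₀ ^ ((1:ℝ)/m))) with hD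
  have hDnn : 0 ≤ D := by
    have : (0:ℝ) ≤ b - a := by linarith
    positivity
  -- final squeeze
  have hbound : ∀ᶠ lam in 𝓝[>] (0:ℝ),
      ‖volN V s lam / volN V s₀ lam - 1‖ ≤ (D / c) * lam ^ ((1:ℝ)/m) := by
    filter_upwards [Ioo_mem_nhdsGT_of_mem (Set.mem_Ico.mpr ⟨le_refl 0, hlam₀⟩)]
      with lam hmem
    obtain ⟨hl0, hl1⟩ := hmem
    have hNb : c * lam ^ (-(2 / m)) ≤ volN V s₀ lam := hlow lam hl0 hl1
    have hpow2 : (0:ℝ) < lam ^ (-(2/m)) := Real.rpow_pos_of_pos hl0 _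
    have hNbpos : 0 < volN V s₀ lam := lt_of_lt_of_le (by positivity) hNb
    have h1 : |volN V s lam - volN V s₀ lam| ≤ D * lam ^ (-(1/m)) := by
      have := habs lam hl0
      rw [hrval lam hl0] at this
      calc |volN V s lam - volN V s₀ lam|
          ≤ (2 * Real.pi)⁻¹ * ((b - a) * (2 * (C₀ ^ ((1:ℝ)/m) * lam ^ (-(1/m))))) := this
        _ = D * lam ^ (-(1/m)) := by rw [hD]; ring
    rw [Real.norm_eq_abs, show volN V s lam / volN V s₀ lam - 1
        = (volN V s lam - volN V s₀ lam) / volN V s₀ lam by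
          field_simp, abs_div, abs_of_pos hNbpos]
    calc |volN V s lam - volN V s₀ lam| / volN V s₀ lam
        ≤ (D * lam ^ (-(1/m))) / (c * lam ^ (-(2/m))) := by
          apply div_le_div₀ (by positivity) h1 (by positivity) hNb
      _ = (D / c) * lam ^ ((1:ℝ)/m) := by
          rw [show -((1:ℝ)/m) = 1/m + -(2/m) by ring, Real.rpow_add hl0]
          have hy := hpow2.ne'
          have hcne := hc.ne'
          field_simp
  have hg : Tendsto (fun lam : ℝ => (D / c) * lam ^ ((1:ℝ)/m)) (𝓝[>] (0:ℝ)) (𝓝 0) := by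
    have h0 : Tendsto (fun lam : ℝ => lam ^ ((1:ℝ)/m)) (𝓝 (0:ℝ)) (𝓝 ((0:ℝ) ^ ((1:ℝ)/m))) :=
      (Real.continuousAt_rpow_const 0 (1/m) (Or.inr (by positivity))).tendsto
    rw [Real.zero_rpow (by positivity : (1:ℝ)/m ≠ 0)] at h0
    have h1 : Tendsto (fun lam : ℝ => lam ^ ((1:ℝ)/m)) (𝓝[>] (0:ℝ)) (𝓝 0) :=
      h0.mono_left nhdsWithin_le_nhds
    simpa using h1.const_mul (D / c)
  have hT : Tendsto (fun lam => volN V s lam / volN V s₀ lam - 1) (𝓝[>] (0:ℝ)) (𝓝 0) :=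
    squeeze_zero_norm' hbound hg
  have h2 : (fun lam => volN V s lam / volN V s₀ lam)
      = fun lam => (volN V s lam / volN V s₀ lam - 1) + 1 := by funext lam; ring
  rw [h2]
  simpa using hT.add_const 1
end

section
/- Let m > 0, C₀ > 0, and let V : ℝ² → [0,∞) be measurable with V(x,ξ) ≤ C₀(1+x²+ξ²)^{−m/2} for all (x,ξ). Suppose that for some s₀ ∈ ℝ the function λ ↦ N(λ,V,s₀) satisfies the homogeneity condition lim_{ϵ↓0} limsup_{λ↓0} λ^{2/m}·(N(λ(1−ϵ),V,s₀) − N(λ(1+ϵ),V,s₀)) = 0. Then for every s ∈ ℝ the function λ ↦ N(λ,V,s) satisfies the same homogeneity condition. -/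
open MeasureTheory Filter Topology

private lemma sq_rpow_inv {c m : ℝ} (hc : 0 ≤ c) (hm : m ≠ 0) :
    (c ^ (1/m)) ^ 2 = c ^ (2/m) := by
  rw [← Real.rpow_natCast (c ^ (1/m)) 2, ← Real.rpow_mul hc]
  norm_num
  rw [show m⁻¹*2 = 2/m by ring]

private lemma key_lt {m C₀ x ξ lam : ℝ} (hm : 0 < m) (hC₀ : 0 < C₀) (hlam : 0 < lam)
    (hbd : lam < C₀ * (1 + x^2 + ξ^2) ^ (-(m/2))) :
    1 + x^2 + ξ^2 < (C₀ / lam) ^ (2/m) := by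
  set t := 1 + x^2 + ξ^2 with ht
  have ht0 : (0:ℝ) < t := by nlinarith [sq_nonneg x, sq_nonneg ξ]
  have hp : 0 < t ^ (m/2) := Real.rpow_pos_of_pos ht0 _
  rw [Real.rpow_neg ht0.le] at hbd
  have h1 : t ^ (m/2) < C₀ / lam := by
    rw [lt_div_iff₀ hlam]
    have := mul_lt_mul_of_pos_left hbd hp
    calc t^(m/2) * lam = t ^ (m/2) * lam := rfl
    _ < t ^ (m/2) * (C₀ * (t^(m/2))⁻¹) := this
    _ = C₀ := by field_simp
  calc t = (t ^ (m/2)) ^ (2/m) := by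
        rw [← Real.rpow_mul ht0.le, show m/2*(2/m) = 1 by field_simp, Real.rpow_one]
  _ < (C₀/lam) ^ (2/m) := Real.rpow_lt_rpow hp.le h1 (by positivity)

private lemma subset_square {m C₀ : ℝ} (hm : 0 < m) (hC₀ : 0 < C₀)
    {V : ℝ → ℝ → ℝ} (hVbd : ∀ x ξ : ℝ, V x ξ ≤ C₀ * (1 + x ^ 2 + ξ ^ 2) ^ (-(m / 2)))
    {lam : ℝ} (hlam : 0 < lam) :
    {p : ℝ × ℝ | V p.1 p.2 > lam} ⊆
      Set.Ioo (-((C₀/lam) ^ (1/m))) ((C₀/lam) ^ (1/m)) ×ˢ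
      Set.Ioo (-((C₀/lam) ^ (1/m))) ((C₀/lam) ^ (1/m)) := by
  intro p hp
  set R := (C₀/lam) ^ (1/m) with hRdef
  have hRpos : 0 < R := Real.rpow_pos_of_pos (div_pos hC₀ hlam) _
  have hkey := key_lt hm hC₀ hlam (lt_of_lt_of_le hp (hVbd p.1 p.2))
  have hR2 : R^2 = (C₀/lam)^(2/m) := sq_rpow_inv (div_pos hC₀ hlam).le hm.ne'
  have h1 : p.1^2 < R^2 := by nlinarith [sq_nonneg p.2]
  have h2 : p.2^2 < R^2 := by nlinarith [sq_nonneg p.1]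
  exact ⟨abs_lt_of_sq_lt_sq' h1 hRpos.le, abs_lt_of_sq_lt_sq' h2 hRpos.le⟩

private lemma vol_toReal_le {m C₀ : ℝ} (hm : 0 < m) (hC₀ : 0 < C₀)
    {V : ℝ → ℝ → ℝ} (hVbd : ∀ x ξ : ℝ, V x ξ ≤ C₀ * (1 + x ^ 2 + ξ ^ 2) ^ (-(m / 2)))
    {lam : ℝ} (hlam : 0 < lam) {T : Set (ℝ × ℝ)} (hT : T ⊆ {p : ℝ × ℝ | V p.1 p.2 > lam}) :
    (volume T).toReal ≤ (2*(C₀/lam)^(1/m)) * (2*(C₀/lam)^(1/m)) ∧ volume T ≠ ⊤ := by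
  set R := (C₀/lam) ^ (1/m) with hRdef
  have hRpos : 0 < R := Real.rpow_pos_of_pos (div_pos hC₀ hlam) _
  have hsq : volume (Set.Ioo (-R) R ×ˢ Set.Ioo (-R) R) = ENNReal.ofReal ((2*R)*(2*R)) := by
    rw [Measure.volume_eq_prod, Measure.prod_prod, Real.volume_Ioo,
      ← ENNReal.ofReal_mul (by linarith)]
    congr 1
    ring
  have hle : volume T ≤ ENNReal.ofReal ((2*R)*(2*R)) :=
    hsq ▸ measure_mono (hT.trans (subset_square hm hC₀ hVbd hlam))
  exact ⟨ENNReal.toReal_le_of_le_ofReal (by nlinarith) hle,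
    (hle.trans_lt ENNReal.ofReal_lt_top).ne⟩

private lemma strip_vol_le {m C₀ : ℝ} (hm : 0 < m) (hC₀ : 0 < C₀)
    {V : ℝ → ℝ → ℝ} (hVbd : ∀ x ξ : ℝ, V x ξ ≤ C₀ * (1 + x ^ 2 + ξ ^ 2) ^ (-(m / 2)))
    {lam : ℝ} (hlam : 0 < lam) {a b : ℝ} (hab : a ≤ b) :
    (volume {p : ℝ × ℝ | V p.1 p.2 > lam ∧ p.1 ∈ Set.Ioc a b}).toReal
      ≤ (b - a) * (2*(C₀/lam)^(1/m)) := by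
  set R := (C₀/lam) ^ (1/m) with hRdef
  have hRpos : 0 < R := Real.rpow_pos_of_pos (div_pos hC₀ hlam) _
  have hsub2 : {p : ℝ × ℝ | V p.1 p.2 > lam ∧ p.1 ∈ Set.Ioc a b}
      ⊆ Set.Ioc a b ×ˢ Set.Ioo (-R) R :=
    fun p hp => ⟨hp.2, (subset_square hm hC₀ hVbd hlam hp.1).2⟩
  have hsq : volume (Set.Ioc a b ×ˢ Set.Ioo (-R) R) = ENNReal.ofReal ((b-a)*(2*R)) := by
    rw [Measure.volume_eq_prod, Measure.prod_prod, Real.volume_Ioo, Real.volume_Ioc,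
      ← ENNReal.ofReal_mul (by linarith)]
    congr 1
    ring
  exact ENNReal.toReal_le_of_le_ofReal
    (mul_nonneg (by linarith) (by linarith)) (hsq ▸ measure_mono hsub2)

private lemma main_est {m C₀ : ℝ} (hm : 0 < m) (hC₀ : 0 < C₀)
    {V : ℝ → ℝ → ℝ}
    (hVbd : ∀ x ξ : ℝ, V x ξ ≤ C₀ * (1 + x ^ 2 + ξ ^ 2) ^ (-(m / 2)))
    (s s₀ : ℝ) {ε : ℝ} (hε0 : 0 < ε) (hε1 : ε < 1) :
    ∃ M K : ℝ, 0 ≤ M ∧ 0 ≤ K ∧ ∀ lam : ℝ, 0 < lam →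
      (0 ≤ lam^(2/m) * (volN V s (lam*(1-ε)) - volN V s (lam*(1+ε)))) ∧
      (0 ≤ lam^(2/m) * (volN V s₀ (lam*(1-ε)) - volN V s₀ (lam*(1+ε)))) ∧
      (lam^(2/m) * (volN V s₀ (lam*(1-ε)) - volN V s₀ (lam*(1+ε)))
        ≤ M) ∧
      (lam^(2/m) * (volN V s (lam*(1-ε)) - volN V s (lam*(1+ε)))
        ≤ lam^(2/m) * (volN V s₀ (lam*(1-ε)) - volN V s₀ (lam*(1+ε))) + K * lam^(1/m)) := by
  have hπ : (0:ℝ) < (2*Real.pi)⁻¹ := by positivity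
  have h1e : (0:ℝ) < 1 - ε := by linarith
  set q := min s s₀ with hq
  set r := max s s₀ with hr
  have hL : 0 ≤ r - q := sub_nonneg.2 min_le_max
  set cst := (C₀/(1-ε))^(1/m) with hcstdef
  have hcst : 0 < cst := Real.rpow_pos_of_pos (div_pos hC₀ h1e) _
  refine ⟨(2*Real.pi)⁻¹ * (4*cst^2), 2*((2*Real.pi)⁻¹*((r-q)*(2*cst))),
    by positivity,
    mul_nonneg (by norm_num) (mul_nonneg hπ.le (mul_nonneg hL (by positivity))), ?_⟩
  intro lam hlam
  set a' := lam*(1-ε) with ha'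
  set b' := lam*(1+ε) with hb'
  have ha'0 : 0 < a' := mul_pos hlam h1e
  have hb'0 : 0 < b' := mul_pos hlam (by linarith)
  have hab : a' ≤ b' := by rw [ha', hb']; nlinarith
  have fin : ∀ t μ : ℝ, 0 < μ → volume {p : ℝ×ℝ | V p.1 p.2 > μ ∧ p.1 > t} ≠ ⊤ :=
    fun t μ hμ => (vol_toReal_le hm hC₀ hVbd hμ (fun p hp => hp.1)).2
  have fbd : ∀ t μ : ℝ, 0 < μ → (volume {p : ℝ×ℝ | V p.1 p.2 > μ ∧ p.1 > t}).toReal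
      ≤ (2*(C₀/μ)^(1/m))*(2*(C₀/μ)^(1/m)) :=
    fun t μ hμ => (vol_toReal_le hm hC₀ hVbd hμ (fun p hp => hp.1)).1
  have fnn : ∀ t μ : ℝ, 0 ≤ volN V t μ :=
    fun t μ => mul_nonneg hπ.le ENNReal.toReal_nonneg
  have fmono : ∀ t μ ν : ℝ, 0 < μ → μ ≤ ν → volN V t ν ≤ volN V t μ := by
    intro t μ ν hμ hμν
    unfold volN
    refine mul_le_mul_of_nonneg_left ?_ hπ.le
    exact ENNReal.toReal_mono (fin t μ hμ)
      (measure_mono (fun p hp => ⟨lt_of_le_of_lt hμν hp.1, hp.2⟩))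
  set St : ℝ → Set (ℝ×ℝ) := fun μ => {p : ℝ×ℝ | V p.1 p.2 > μ ∧ p.1 ∈ Set.Ioc q r} with hSt
  have stfin : ∀ μ : ℝ, 0 < μ → volume (St μ) ≠ ⊤ :=
    fun μ hμ => (vol_toReal_le hm hC₀ hVbd hμ (fun p hp => hp.1)).2
  have stbd : ∀ μ : ℝ, 0 < μ → (volume (St μ)).toReal ≤ (r-q)*(2*(C₀/μ)^(1/m)) :=
    fun μ hμ => strip_vol_le hm hC₀ hVbd hμ min_le_max
  have stmono : (volume (St b')).toReal ≤ (volume (St a')).toReal :=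
    ENNReal.toReal_mono (stfin a' ha'0)
      (measure_mono fun p hp => ⟨lt_of_le_of_lt hab hp.1, hp.2⟩)
  have comp : ∀ t₁ t₂ μ : ℝ, 0 < μ → q ≤ t₁ → t₂ ≤ r →
      volN V t₁ μ ≤ volN V t₂ μ + (2*Real.pi)⁻¹ * (volume (St μ)).toReal := by
    intro t₁ t₂ μ hμ hq1 hr2
    unfold volN
    rw [← mul_add]
    refine mul_le_mul_of_nonneg_left ?_ hπ.le
    have hsub : {p : ℝ×ℝ | V p.1 p.2 > μ ∧ p.1 > t₁}
        ⊆ {p : ℝ×ℝ | V p.1 p.2 > μ ∧ p.1 > t₂} ∪ St μ := by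
      intro p hp
      by_cases hcc : p.1 > t₂
      · exact Or.inl ⟨hp.1, hcc⟩
      · exact Or.inr ⟨hp.1, lt_of_le_of_lt hq1 hp.2, le_trans (not_lt.1 hcc) hr2⟩
    have h1 : volume {p : ℝ×ℝ | V p.1 p.2 > μ ∧ p.1 > t₁}
        ≤ volume {p : ℝ×ℝ | V p.1 p.2 > μ ∧ p.1 > t₂} + volume (St μ) :=
      (measure_mono hsub).trans (measure_union_le _ _)
    have h2 := ENNReal.toReal_mono (ENNReal.add_ne_top.2 ⟨fin t₂ μ hμ, stfin μ hμ⟩) h1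
    rwa [ENNReal.toReal_add (fin t₂ μ hμ) (stfin μ hμ)] at h2
  have hlam1m : 0 < lam^(1/m) := Real.rpow_pos_of_pos hlam _
  have h2m : lam^(2/m) = lam^(1/m) * lam^(1/m) := by
    rw [← Real.rpow_add hlam]; congr 1; ring
  have hc : cst = lam^(1/m) * (C₀/a')^(1/m) := by
    rw [← Real.mul_rpow hlam.le (by positivity), hcstdef]
    congr 1
    rw [ha']
    field_simp
  have hP : 0 ≤ lam^(2/m) := Real.rpow_nonneg hlam.le _
  have hmono_s := fmono s a' b' ha'0 hab
  have hmono_s₀ := fmono s₀ a' b' ha'0 hab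
  refine ⟨mul_nonneg hP (by linarith), mul_nonneg hP (by linarith), ?_, ?_⟩
  · have hfs₀a : volN V s₀ a' ≤ (2*Real.pi)⁻¹ * ((2*(C₀/a')^(1/m))*(2*(C₀/a')^(1/m))) := by
      unfold volN
      exact mul_le_mul_of_nonneg_left (fbd s₀ a' ha'0) hπ.le
    have key1 : lam^(2/m) * ((2*Real.pi)⁻¹ * ((2*(C₀/a')^(1/m))*(2*(C₀/a')^(1/m))))
        = (2*Real.pi)⁻¹*(4*cst^2) := by
      rw [h2m, hc]; ring
    calc lam^(2/m) * (volN V s₀ a' - volN V s₀ b') ≤ lam^(2/m) * volN V s₀ a' := by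
          refine mul_le_mul_of_nonneg_left ?_ hP
          linarith [fnn s₀ b']
    _ ≤ lam^(2/m) * ((2*Real.pi)⁻¹ * ((2*(C₀/a')^(1/m))*(2*(C₀/a')^(1/m)))) :=
          mul_le_mul_of_nonneg_left hfs₀a hP
    _ = (2*Real.pi)⁻¹*(4*cst^2) := key1
  · have c1 := comp s s₀ a' ha'0 (min_le_left _ _) (le_max_right _ _)
    have c2 := comp s₀ s b' hb'0 (min_le_right _ _) (le_max_left _ _)
    set Ta := (volume (St a')).toReal with hTa
    set Tb := (volume (St b')).toReal with hTb
    have hD : volN V s a' - volN V s b'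
        ≤ (volN V s₀ a' - volN V s₀ b') + (2*Real.pi)⁻¹ * (Ta + Tb) := by
      have hexp : (2*Real.pi)⁻¹*(Ta+Tb) = (2*Real.pi)⁻¹*Ta + (2*Real.pi)⁻¹*Tb := by ring
      linarith
    have step := mul_le_mul_of_nonneg_left hD hP
    rw [mul_add] at step
    have hE : lam^(2/m) * ((2*Real.pi)⁻¹ * (Ta + Tb))
        ≤ 2*((2*Real.pi)⁻¹*((r-q)*(2*cst))) * lam^(1/m) := by
      have hst1 := stbd a' ha'0
      have h1 : Ta + Tb ≤ 2*((r-q)*(2*(C₀/a')^(1/m))) := by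
        linarith [stmono]
      have h2 : lam^(2/m)*((2*Real.pi)⁻¹*(Ta+Tb))
          ≤ lam^(2/m)*((2*Real.pi)⁻¹*(2*((r-q)*(2*(C₀/a')^(1/m))))) :=
        mul_le_mul_of_nonneg_left (mul_le_mul_of_nonneg_left h1 hπ.le) hP
      have h3 : lam^(2/m)*((2*Real.pi)⁻¹*(2*((r-q)*(2*(C₀/a')^(1/m)))))
          = (2*((2*Real.pi)⁻¹*((r-q)*(2*cst)))) * lam^(1/m) := by
        rw [h2m, hc]; ring
      linarith
    linarith

/-- If `V ≥ 0` is measurable with `V(x,ξ) ≤ C₀⟨x,ξ⟩^{−m}` and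
`λ ↦ N(λ,V,s₀)` satisfies the homogeneity condition for some `s₀`, then for every `s` the
function `λ ↦ N(λ,V,s)` satisfies the same homogeneity condition. -/
theorem stmt_15 (m C₀ : ℝ) (hm : 0 < m) (hC₀ : 0 < C₀)
    (V : ℝ → ℝ → ℝ) (hVmeas : Measurable (fun p : ℝ × ℝ => V p.1 p.2))
    (hVnn : ∀ x ξ : ℝ, 0 ≤ V x ξ)
    (hVbd : ∀ x ξ : ℝ, V x ξ ≤ C₀ * (1 + x ^ 2 + ξ ^ 2) ^ (-(m / 2)))
    (s₀ : ℝ) (hhom : HomCond m (fun lam => volN V s₀ lam)) :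
    ∀ s : ℝ, HomCond m (fun lam => volN V s lam) := by
  intro s
  unfold HomCond at hhom ⊢
  have hεev : ∀ᶠ ε in 𝓝[>] (0:ℝ), 0 < ε ∧ ε < 1 := by
    filter_upwards [self_mem_nhdsWithin,
      mem_nhdsWithin_of_mem_nhds (gt_mem_nhds (by norm_num : (0:ℝ) < 1))] with ε h1 h2
    exact ⟨h1, h2⟩
  have hlamev : ∀ᶠ lam in 𝓝[>] (0:ℝ), 0 < lam := self_mem_nhdsWithin
  have hlamev1 : ∀ᶠ lam in 𝓝[>] (0:ℝ), 0 < lam ∧ lam ≤ 1 := by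
    filter_upwards [self_mem_nhdsWithin,
      mem_nhdsWithin_of_mem_nhds (gt_mem_nhds (by norm_num : (0:ℝ) < 1))] with lam h1 h2
    exact ⟨h1, h2.le⟩
  -- tendsto of lam^(1/m) to 0
  have hrpow0 : Tendsto (fun lam : ℝ => lam ^ (1/m)) (𝓝[>] (0:ℝ)) (𝓝 0) := by
    have hca : ContinuousAt (fun x : ℝ => x ^ (1/m)) 0 :=
      Real.continuousAt_rpow_const 0 (1/m) (Or.inr (by positivity))
    have := hca.tendsto.mono_left (nhdsWithin_le_nhds (s := Set.Ioi (0:ℝ)))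
    rwa [Real.zero_rpow (by positivity : (1:ℝ)/m ≠ 0)] at this
  refine tendsto_of_tendsto_of_tendsto_of_le_of_le' tendsto_const_nhds hhom ?_ ?_
  · -- 0 ≤ limsup
    filter_upwards [hεev] with ε ⟨hε0, hε1⟩
    obtain ⟨M, K, hM, hK, hbd⟩ := main_est hm hC₀ hVbd s s₀ hε0 hε1
    have hu0 : ∀ᶠ lam in 𝓝[>] (0:ℝ),
        (0:ℝ) ≤ lam ^ (2/m) * (volN V s (lam*(1-ε)) - volN V s (lam*(1+ε))) := by
      filter_upwards [hlamev] with lam hlam using (hbd lam hlam).1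
    have hubdd : IsBoundedUnder (· ≤ ·) (𝓝[>] (0:ℝ))
        (fun lam : ℝ => lam ^ (2/m) * (volN V s (lam*(1-ε)) - volN V s (lam*(1+ε)))) := by
      apply isBoundedUnder_of_eventually_le (a := M + K)
      filter_upwards [hlamev1] with lam ⟨hlam, hlam1⟩
      have h1 := (hbd lam hlam).2.2.1
      have h2 := (hbd lam hlam).2.2.2
      have h3 : lam ^ (1/m) ≤ 1 :=
        Real.rpow_le_one hlam.le hlam1 (by positivity)
      nlinarith [(hbd lam hlam).2.1]
    exact le_limsup_of_frequently_le hu0.frequently hubdd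
  · -- limsup u ≤ limsup v
    filter_upwards [hεev] with ε ⟨hε0, hε1⟩
    obtain ⟨M, K, hM, hK, hbd⟩ := main_est hm hC₀ hVbd s s₀ hε0 hε1
    set u : ℝ → ℝ := fun lam =>
      lam ^ (2/m) * (volN V s (lam*(1-ε)) - volN V s (lam*(1+ε))) with hu
    set v : ℝ → ℝ := fun lam =>
      lam ^ (2/m) * (volN V s₀ (lam*(1-ε)) - volN V s₀ (lam*(1+ε))) with hv
    set e : ℝ → ℝ := fun lam => K * lam ^ (1/m) with he
    have he0 : Tendsto e (𝓝[>] (0:ℝ)) (𝓝 0) := by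
      have := hrpow0.const_mul K
      rw [mul_zero] at this
      exact this
    have hv0 : ∀ᶠ lam in 𝓝[>] (0:ℝ), (0:ℝ) ≤ v lam := by
      filter_upwards [hlamev] with lam hlam using (hbd lam hlam).2.1
    have hvM : ∀ᶠ lam in 𝓝[>] (0:ℝ), v lam ≤ M := by
      filter_upwards [hlamev] with lam hlam using (hbd lam hlam).2.2.1
    have huve : ∀ᶠ lam in 𝓝[>] (0:ℝ), u lam ≤ (v + e) lam := by
      filter_upwards [hlamev] with lam hlam using (hbd lam hlam).2.2.2
    have hu0 : ∀ᶠ lam in 𝓝[>] (0:ℝ), (0:ℝ) ≤ u lam := by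
      filter_upwards [hlamev] with lam hlam using (hbd lam hlam).1
    have he0' : ∀ᶠ lam in 𝓝[>] (0:ℝ), (0:ℝ) ≤ e lam := by
      filter_upwards [hlamev] with lam hlam
      exact mul_nonneg hK (Real.rpow_nonneg hlam.le _)
    have hv_bdd : IsBoundedUnder (· ≤ ·) (𝓝[>] (0:ℝ)) v := isBoundedUnder_of_eventually_le hvM
    have he_bdd : IsBoundedUnder (· ≤ ·) (𝓝[>] (0:ℝ)) e := he0.isBoundedUnder_le
    calc limsup u (𝓝[>] (0:ℝ))
        ≤ limsup (v + e) (𝓝[>] (0:ℝ)) := by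
          refine limsup_le_limsup huve ?_ ?_
          · exact (isBoundedUnder_of_eventually_ge hu0).isCoboundedUnder_le
          · exact isBoundedUnder_le_add hv_bdd he_bdd
    _ ≤ limsup v (𝓝[>] (0:ℝ)) + limsup e (𝓝[>] (0:ℝ)) :=
          limsup_add_le (isBoundedUnder_of_eventually_ge hv0) hv_bdd
            ((isBoundedUnder_of_eventually_ge he0').isCoboundedUnder_le) he_bdd
    _ = limsup v (𝓝[>] (0:ℝ)) := by rw [he0.limsup_eq, add_zero]
end

section
/- Let M > 1, m > 1, C₀, C₁ > 0 and ε > 0. Let B : ℝ → ℝ be measurable with B(x) ≤ B₊ and B₊ − B(x) ≤ C₁(1+x²)^{−M/2} for all x ∈ ℝ. Let V : ℝ² → [0,∞) be measurable with V(x,ξ) ≤ C₀(1+x²+ξ²)^{−m/2} for all (x,ξ). Then there is a constant C > 0 such that for all λ > 0, ∫∫_{{(x,ξ) : V(x,ξ) > λ, x ≥ −2ε}} (B₊ − B(x)) dx dξ ≤ C·λ^{−1/m}; in particular this integral is o(λ^{−2/m}) as λ ↓ 0. -/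
open MeasureTheory Filter Topology Asymptotics

/-- If `B ≤ B₊` with `B₊ − B(x) ≤ C₁⟨x⟩^{−M}` (`M > 1`) and
`0 ≤ V(x,ξ) ≤ C₀⟨x,ξ⟩^{−m}` (`m > 1`), then there is `C > 0` with
`∫∫_{{V > λ, x ≥ −2ε}} (B₊ − B(x)) dx dξ ≤ C λ^{−1/m}` for all `λ > 0`; in particular this
integral is `o(λ^{−2/m})` as `λ ↓ 0`. -/
theorem stmt_19 (M m C₀ C₁ ε : ℝ) (hM : 1 < M) (hm : 1 < m)
    (hC₀ : 0 < C₀) (hC₁ : 0 < C₁) (hε : 0 < ε)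
    (Bp : ℝ) (B : ℝ → ℝ) (hB : Measurable B)
    (hBle : ∀ x : ℝ, B x ≤ Bp)
    (hBdecay : ∀ x : ℝ, Bp - B x ≤ C₁ * (1 + x ^ 2) ^ (-(M / 2)))
    (V : ℝ → ℝ → ℝ) (hVmeas : Measurable (fun p : ℝ × ℝ => V p.1 p.2))
    (hVnn : ∀ x ξ : ℝ, 0 ≤ V x ξ)
    (hVbd : ∀ x ξ : ℝ, V x ξ ≤ C₀ * (1 + x ^ 2 + ξ ^ 2) ^ (-(m / 2))) :
    ∃ C > (0:ℝ),
      (∀ lam : ℝ, 0 < lam →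
        (∫ p : ℝ × ℝ in {p : ℝ × ℝ | V p.1 p.2 > lam ∧ -2 * ε ≤ p.1}, (Bp - B p.1))
          ≤ C * lam ^ (-(1 / m))) ∧
      (fun lam : ℝ =>
          ∫ p : ℝ × ℝ in {p : ℝ × ℝ | V p.1 p.2 > lam ∧ -2 * ε ≤ p.1}, (Bp - B p.1))
        =o[𝓝[>] (0:ℝ)] fun lam : ℝ => lam ^ (-(2 / m)) := by
  have hm0 : 0 < m := lt_trans one_pos hm
  -- the dominating function of `x`
  set h : ℝ → ℝ := fun x => C₁ * (1 + x ^ 2) ^ (-(M / 2)) with hh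
  have hint : Integrable h := by
    have := (integrable_rpow_neg_one_add_norm_sq (E := ℝ) (μ := volume)
      (r := M) (by simpa using hM)).const_mul C₁
    refine this.congr ?_
    refine Eventually.of_forall fun x => ?_
    simp [hh, Real.norm_eq_abs, sq_abs, neg_div]
  have hh_nn : ∀ x, 0 ≤ h x := fun x => by
    have : (0:ℝ) < 1 + x ^ 2 := by positivity
    positivity
  set I : ℝ := ∫ x : ℝ, h x with hI
  have hI0 : 0 ≤ I := integral_nonneg hh_nn
  set C : ℝ := 2 * (I + 1) * C₀ ^ (1 / m) with hC
  have hCpos : 0 < C := by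
    have : (0:ℝ) < C₀ ^ (1/m) := Real.rpow_pos_of_pos hC₀ _
    nlinarith
  -- nonnegativity of the integrand
  have hfnn : ∀ p : ℝ × ℝ, 0 ≤ Bp - B p.1 := fun p => sub_nonneg.mpr (hBle p.1)
  have hfle : ∀ p : ℝ × ℝ, Bp - B p.1 ≤ h p.1 := fun p => hBdecay p.1
  have hSmeas : ∀ lam : ℝ,
      MeasurableSet {p : ℝ × ℝ | V p.1 p.2 > lam ∧ -2 * ε ≤ p.1} := by
    intro lam
    exact (measurableSet_lt measurable_const hVmeas).inter
      (measurable_fst measurableSet_Ici)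
  -- main bound
  have key : ∀ lam : ℝ, 0 < lam →
      (∫ p : ℝ × ℝ in {p : ℝ × ℝ | V p.1 p.2 > lam ∧ -2 * ε ≤ p.1}, (Bp - B p.1))
        ≤ C * lam ^ (-(1 / m)) := by
    intro lam hlam
    set r : ℝ := (C₀ / lam) ^ (1 / m) with hr
    have hrpos : 0 < r := Real.rpow_pos_of_pos (div_pos hC₀ hlam) _
    set S := {p : ℝ × ℝ | V p.1 p.2 > lam ∧ -2 * ε ≤ p.1} with hS
    set T : Set (ℝ × ℝ) := Set.univ ×ˢ Set.Icc (-r) r with hT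
    -- S ⊆ T
    have hsub : S ⊆ T := by
      rintro ⟨x, ξ⟩ ⟨hV, -⟩
      refine ⟨Set.mem_univ _, ?_⟩
      have habs : |ξ| ≤ r := by
        have h1 : (0:ℝ) < 1 + x ^ 2 + ξ ^ 2 := by positivity
        have h2 : lam < C₀ * (1 + x ^ 2 + ξ ^ 2) ^ (-(m / 2)) :=
          lt_of_lt_of_le hV (hVbd x ξ)
        have h3 : (1 + x ^ 2 + ξ ^ 2) ^ (-(m / 2))
            = ((1 + x ^ 2 + ξ ^ 2) ^ (m / 2))⁻¹ := by
          rw [Real.rpow_neg h1.le]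
        have h4 : lam * (1 + x ^ 2 + ξ ^ 2) ^ (m / 2) < C₀ := by
          rw [h3] at h2
          have hp : (0:ℝ) < (1 + x ^ 2 + ξ ^ 2) ^ (m / 2) :=
            Real.rpow_pos_of_pos h1 _
          calc lam * (1 + x ^ 2 + ξ ^ 2) ^ (m / 2)
              < (C₀ * ((1 + x ^ 2 + ξ ^ 2) ^ (m / 2))⁻¹) *
                  (1 + x ^ 2 + ξ ^ 2) ^ (m / 2) := by
                exact mul_lt_mul_of_pos_right h2 hp
            _ = C₀ := by field_simp
        have h5 : (ξ ^ 2 : ℝ) ^ (m / 2) ≤ (1 + x ^ 2 + ξ ^ 2) ^ (m / 2) := by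
          apply Real.rpow_le_rpow (by positivity) (by nlinarith) (by positivity)
        have h6 : (ξ ^ 2 : ℝ) ^ (m / 2) = |ξ| ^ m := by
          rw [← sq_abs, ← Real.rpow_natCast |ξ| 2, ← Real.rpow_mul (abs_nonneg ξ)]
          congr 1
          ring
        have h7 : |ξ| ^ m < C₀ / lam := by
          rw [← h6]
          have := h5.trans_lt (by
            rw [lt_div_iff₀ hlam]
            linarith [h4] : (1 + x ^ 2 + ξ ^ 2) ^ (m / 2) < C₀ / lam)
          exact this
        calc |ξ| = (|ξ| ^ m) ^ (1 / m) := by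
              rw [← Real.rpow_mul (abs_nonneg ξ), mul_one_div, div_self hm0.ne',
                Real.rpow_one]
          _ ≤ (C₀ / lam) ^ (1 / m) :=
              Real.rpow_le_rpow (Real.rpow_nonneg (abs_nonneg ξ) m) h7.le
                (by positivity)
          _ = r := rfl
      exact abs_le.mp habs
    -- integrability of the dominating function on T
    have hintT : IntegrableOn (fun p : ℝ × ℝ => h p.1) T := by
      rw [IntegrableOn, hT, Measure.volume_eq_prod, ← Measure.prod_restrict,
        Measure.restrict_univ]
      have h1 : Integrable (fun _ : ℝ => (1:ℝ)) (volume.restrict (Set.Icc (-r) r)) := by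
        apply integrable_const
      have := hint.mul_prod h1
      refine this.congr ?_
      exact Eventually.of_forall fun p => by simp
    have hintS : IntegrableOn (fun p : ℝ × ℝ => h p.1) S := hintT.mono_set hsub
    have hintfS : IntegrableOn (fun p : ℝ × ℝ => Bp - B p.1) S := by
      refine Integrable.mono hintS ?_ ?_
      · exact ((measurable_const.sub (hB.comp measurable_fst)).aestronglyMeasurable).restrict
      · refine Eventually.of_forall fun p => ?_
        rw [Real.norm_eq_abs, Real.norm_eq_abs, abs_of_nonneg (hfnn p),
          abs_of_nonneg (hh_nn p.1)]
        exact hfle p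
    -- chain of inequalities
    have step1 : (∫ p in S, (Bp - B p.1)) ≤ ∫ p in S, h p.1 :=
      setIntegral_mono_on hintfS hintS (hSmeas lam) (fun p _ => hfle p)
    have step2 : (∫ p in S, h p.1) ≤ ∫ p in T, h p.1 :=
      setIntegral_mono_set hintT (Eventually.of_forall fun p => hh_nn p.1)
        (HasSubset.Subset.eventuallyLE hsub)
    have step3 : (∫ p in T, h p.1) = I * (2 * r) := by
      rw [hT, Measure.volume_eq_prod]
      have : (∫ p in (Set.univ ×ˢ Set.Icc (-r) r),
          h p.1 * (1:ℝ) ∂(volume : Measure ℝ).prod volume)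
          = (∫ x in Set.univ, h x) * ∫ _ in Set.Icc (-r) r, (1:ℝ) :=
        setIntegral_prod_mul h (fun _ => (1:ℝ)) _ _
      simp only [mul_one] at this
      rw [this, Measure.restrict_univ, setIntegral_const, smul_eq_mul, mul_one,
        Real.volume_real_Icc]
      rw [max_eq_left (by linarith), ← hI]
      ring
    have hrval : r = C₀ ^ (1 / m) * lam ^ (-(1 / m)) := by
      rw [hr, Real.div_rpow hC₀.le hlam.le, div_eq_mul_inv, ← Real.rpow_neg hlam.le]
    have final : I * (2 * r) ≤ C * lam ^ (-(1 / m)) := by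
      rw [hrval, hC]
      have h1 : (0:ℝ) < C₀ ^ (1/m) := Real.rpow_pos_of_pos hC₀ _
      have h2 : (0:ℝ) < lam ^ (-(1/m)) := Real.rpow_pos_of_pos hlam _
      nlinarith
    calc (∫ p in S, (Bp - B p.1)) ≤ ∫ p in S, h p.1 := step1
      _ ≤ ∫ p in T, h p.1 := step2
      _ = I * (2 * r) := step3
      _ ≤ C * lam ^ (-(1 / m)) := final
  refine ⟨C, hCpos, key, ?_⟩
  -- little-o part
  have hO : (fun lam : ℝ =>
      ∫ p : ℝ × ℝ in {p : ℝ × ℝ | V p.1 p.2 > lam ∧ -2 * ε ≤ p.1}, (Bp - B p.1))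
      =O[𝓝[>] (0:ℝ)] fun lam : ℝ => lam ^ (-(1 / m)) := by
    refine IsBigO.of_bound C ?_
    filter_upwards [self_mem_nhdsWithin] with lam hlam
    have hlam' : (0:ℝ) < lam := hlam
    have hnn : 0 ≤ ∫ p : ℝ × ℝ in {p : ℝ × ℝ | V p.1 p.2 > lam ∧ -2 * ε ≤ p.1},
        (Bp - B p.1) := setIntegral_nonneg (hSmeas lam) fun p _ => hfnn p
    rw [Real.norm_of_nonneg hnn,
      Real.norm_of_nonneg (Real.rpow_nonneg hlam'.le _)]
    exact key lam hlam'
  have ho : (fun lam : ℝ => lam ^ (-(1 / m)))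
      =o[𝓝[>] (0:ℝ)] fun lam : ℝ => lam ^ (-(2 / m)) := by
    have heq : (fun lam : ℝ => lam ^ (1 / m) * lam ^ (-(2 / m)))
        =ᶠ[𝓝[>] (0:ℝ)] fun lam : ℝ => lam ^ (-(1 / m)) := by
      filter_upwards [self_mem_nhdsWithin] with lam hlam
      have hlam' : (0:ℝ) < lam := hlam
      rw [← Real.rpow_add hlam']
      norm_num
      ring_nf
    have htend : Tendsto (fun lam : ℝ => lam ^ (1 / m)) (𝓝[>] (0:ℝ)) (𝓝 0) := by
      have : Tendsto (fun lam : ℝ => lam ^ (1 / m)) (𝓝 (0:ℝ)) (𝓝 ((0:ℝ) ^ (1 / m))) := by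
        apply ContinuousAt.tendsto
        exact Real.continuousAt_rpow_const 0 (1/m) (Or.inr (by positivity))
      rw [Real.zero_rpow (by positivity : (0:ℝ) < 1/m).ne'] at this
      exact this.mono_left nhdsWithin_le_nhds
    have h1 : (fun lam : ℝ => lam ^ (1 / m)) =o[𝓝[>] (0:ℝ)] (fun _ => (1:ℝ)) :=
      (isLittleO_one_iff ℝ).mpr htend
    have h2 := h1.mul_isBigO
      (isBigO_refl (fun lam : ℝ => lam ^ (-(2 / m))) (𝓝[>] (0:ℝ)))
    simp only [one_mul] at h2
    exact heq.symm.trans_isLittleO h2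
  exact hO.trans_isLittleO ho
end
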